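/- arXiv:cs/0509046 — 5 statements merged into one kernel-verified Lean document; each statement's English description precedes it below -/
import Mathlib

section
/- The number of t-ary trees with n nodes equals (1/((t-1)n+1)) * binomial(tn, n), for all n ≥ 0 and t > 1. -/
/-- A `t`-ary tree: either empty, or a root node with `t` ordered subtrees. -/
inductive TAry (t : ℕ) : Type where
  | nil : TAry t
  | node : (Fin t → TAry t) → TAry t

namespace TAry

variable {t : ℕ}

/-- Number of nodes of a `t`-ary tree. -/
def size : TAry t → ℕ
  | nil => 0
  | node c => 1 + ∑ i, (c i).size

/-- Sum over nodes of `d +` (depth of the node). -/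
def plFrom : TAry t → ℕ → ℕ
  | nil, _ => 0
  | node c, d => d + ∑ i, (c i).plFrom (d + 1)

/-- Path length: the sum of the depths of all nodes. -/
def pathLength (T : TAry t) : ℕ := T.plFrom 0

/-- Number of nodes at depth `j` (the profile `D_j`). -/
def depthCount : ℕ → TAry t → ℕ
  | _, nil => 0
  | 0, node _ => 1
  | j + 1, node c => ∑ i, depthCount j (c i)

/-- Number of leaves (nodes all of whose subtrees are empty). -/
def leaves : TAry t → ℕ
  | nil => 0
  | node c => max 1 (∑ i, (c i).leaves)

end TAry

namespace TAry
variable {t : ℕ}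

/-- Every internal (non-leaf) node has exactly one child. -/
def chain : TAry t → Prop
  | nil => True
  | node c => (∀ i, c i = nil) ∨ ∃ i, c i ≠ nil ∧ chain (c i) ∧ ∀ j, j ≠ i → c j = nil

/-- Number of leaves at depth `j`. -/
def leavesAt : ℕ → TAry t → ℕ
  | _, nil => 0
  | 0, node c => if (∑ i, (c i).size) = 0 then 1 else 0
  | j + 1, node c => ∑ i, leavesAt j (c i)

/-- The subtree of `T` at position `pos` (empty tree if the position is invalid). -/
def getAt : TAry t → List (Fin t) → TAry t
  | T, [] => T
  | nil, _ :: _ => nil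
  | node c, i :: rest => getAt (c i) rest

/-- Replace the subtree of `T` at position `pos` by `τ`. -/
def replaceAt : TAry t → List (Fin t) → TAry t → TAry t
  | _, [], τ => τ
  | nil, _ :: _, _ => nil
  | node c, i :: rest, τ => node (fun j => if j = i then replaceAt (c i) rest τ else c j)

/-- Attach the trees `τs i` at the positions `pos i`, for `i = 0, …, ℓ-1`. -/
def attachAll {ℓ : ℕ} (T : TAry t) (pos : Fin ℓ → List (Fin t)) (τs : Fin ℓ → TAry t) :
    TAry t :=
  (List.finRange ℓ).foldl (fun A i => replaceAt A (pos i) (τs i)) T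

end TAry

/-- The binary entropy function (natural logarithm). -/
noncomputable def binEnt (x : ℝ) : ℝ := -x * Real.log x - (1 - x) * Real.log (1 - x)

/-- Number of `t`-ary trees with exactly `n` nodes. -/
noncomputable def Ct (t n : ℕ) : ℕ := Nat.card {T : TAry t // T.size = n}

/-- Number of `t`-ary trees with path length exactly `p`. -/
noncomputable def Tt (t p : ℕ) : ℕ := Nat.card {T : TAry t // T.pathLength = p}

/-!
Write a `t`-ary tree in preorder as a word over `Bool`, `true` for a node and `false` for an
empty subtree, and give `true` the weight `t - 1` and `false` the weight `-1`. The words so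
obtained (Łukasiewicz words) are exactly those of total weight `-1` all of whose proper prefixes
have nonnegative weight, so the trees with `n` nodes correspond to such words with `n` letters
`true` and length `t n + 1`. By the cycle lemma, exactly one of the `t n + 1` rotations of any
word of weight `-1` has this prefix property. Hence `(t n + 1) C_t(n) = binomial(t n + 1, n)`,
which is `((t - 1) n + 1) C_t(n) = binomial(t n, n)`.
-/

lemma List.rotate_rotate_of_add_eq_length {α : Type*} {l : List α} {a b : ℕ}
    (h : a + b = l.length) : (l.rotate a).rotate b = l := by
  rw [List.rotate_rotate, h, List.rotate_length]

lemma List.count_true_ofFn_mem {m : ℕ} (s : Finset (Fin m)) :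
    (List.ofFn fun i => decide (i ∈ s)).count true = s.card := by
  rw [← Multiset.coe_count, ← Fin.univ_val_map, Multiset.count_map]
  simp [← Finset.filter_val]

lemma card_length_count_eq_choose (m k : ℕ) :
    Nat.card {w : List Bool // w.length = m ∧ w.count true = k} = m.choose k := by
  let f : {s : Finset (Fin m) // s.card = k} →
      {w : List Bool // w.length = m ∧ w.count true = k} := fun s =>
    ⟨List.ofFn fun i => decide (i ∈ s.1), by simp, by rw [List.count_true_ofFn_mem, s.2]⟩
  have hf : Function.Bijective f := by
    refine ⟨fun s s' h => ?_, fun ⟨w, hw, hk⟩ => ?_⟩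
    · have := List.ofFn_injective (congrArg Subtype.val h)
      exact Subtype.ext (Finset.ext fun i => by simpa using congrFun this i)
    · subst hw
      set s : Finset (Fin w.length) := Finset.univ.filter fun i => w[i] = true
      have hs : (List.ofFn fun i => decide (i ∈ s)) = w := by simp [s]
      exact ⟨⟨s, by rw [← List.count_true_ofFn_mem, hs, hk]⟩, Subtype.ext hs⟩
  rw [← Nat.card_eq_of_bijective f hf, Nat.card_eq_fintype_card, Fintype.card_finset_len,
    Fintype.card_fin]

namespace Lukasiewicz

variable {t k : ℕ} {u v w B C : List Bool}

def weight (t : ℕ) (w : List Bool) : ℤ := t * w.count true - w.length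

@[simp] lemma weight_nil : weight t [] = 0 := by simp [weight]

@[simp] lemma weight_cons_true (w : List Bool) : weight t (true :: w) = t - 1 + weight t w := by
  simp [weight]; ring

@[simp] lemma weight_cons_false (w : List Bool) : weight t (false :: w) = -1 + weight t w := by
  simp [weight]; ring

lemma weight_append (u v : List Bool) : weight t (u ++ v) = weight t u + weight t v := by
  simp only [weight, List.count_append, List.length_append]; push_cast; ring

lemma weight_rotate (w : List Bool) (r : ℕ) : weight t (w.rotate r) = weight t w := by
  simp only [weight, (List.rotate_perm w r).count_eq, List.length_rotate]

lemma weight_take_succ_ge (w : List Bool) (j : ℕ) :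
    weight t (w.take j) - 1 ≤ weight t (w.take (j + 1)) := by
  rw [List.take_add, weight_append]
  rcases w.drop j with _ | ⟨_ | _, _⟩ <;> simp
  omega

-- `j + r - w.length` truncates to `0` while the prefix stays inside `w.drop r`.
lemma weight_take_rotate {r j : ℕ} (hr : r ≤ w.length) (hj : j ≤ w.length) :
    weight t ((w.rotate r).take j) =
      weight t (w.take (r + j)) - weight t (w.take r) + weight t (w.take (j + r - w.length)) := by
  rw [List.rotate_eq_drop_append_take hr, List.take_append, List.take_take, List.length_drop,
    List.take_add, weight_append, weight_append,
    show min (j - (w.length - r)) r = j + r - w.length by omega]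
  ring

/-- `IsCode t k w`: the word `w` is the preorder code of a sequence of `k` `t`-ary trees. -/
def IsCode (t k : ℕ) (w : List Bool) : Prop :=
  weight t w = -k ∧ ∀ j < w.length, -(k : ℤ) < weight t (w.take j)

lemma IsCode.length_eq (h : IsCode t 1 w) : w.length = t * w.count true + 1 := by
  have := h.1
  simp only [weight] at this
  omega

lemma isCode_zero_iff : IsCode t 0 w ↔ w = [] := by
  refine ⟨fun h => ?_, fun h => by simp [h, IsCode]⟩
  by_contra hw
  simpa using h.2 0 (List.length_pos_of_ne_nil hw)

lemma isCode_false_cons_iff : IsCode t 1 (false :: w) ↔ w = [] := by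
  refine ⟨fun h => ?_, fun h => ⟨by simp [h], fun j hj => by simp_all⟩⟩
  by_contra hw
  simpa using h.2 1 (by simpa using List.length_pos_of_ne_nil hw)

lemma isCode_true_cons_iff : IsCode t 1 (true :: w) ↔ IsCode t t w := by
  simp only [IsCode, weight_cons_true, List.length_cons]
  refine ⟨fun ⟨h1, h2⟩ => ⟨by omega, fun j hj => ?_⟩,
    fun ⟨h1, h2⟩ => ⟨by omega, fun j hj => ?_⟩⟩
  · have := h2 (j + 1) (by omega)
    rw [List.take_succ_cons, weight_cons_true] at this
    omega
  · rcases j with _ | j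
    · simp
    · have := h2 j (by omega)
      rw [List.take_succ_cons, weight_cons_true]
      omega

lemma IsCode.append (hB : IsCode t 1 B) (hu : IsCode t k u) : IsCode t (k + 1) (B ++ u) := by
  refine ⟨by rw [weight_append, hB.1, hu.1]; push_cast; ring, fun j hj => ?_⟩
  rw [List.take_append, weight_append]
  rcases lt_or_ge j B.length with hjB | hjB
  · have := hB.2 j hjB
    rw [Nat.sub_eq_zero_of_le hjB.le, List.take_zero, weight_nil]
    omega
  · have := hu.2 (j - B.length) (by simp at hj; omega)
    rw [List.take_of_length_le hjB, hB.1]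
    push_cast
    omega

lemma IsCode.exists_append (h : IsCode t (k + 1) w) :
    ∃ B u, IsCode t 1 B ∧ IsCode t k u ∧ B ++ u = w := by
  have hneg : ∃ j, weight t (w.take j) < 0 := ⟨w.length, by rw [List.take_length, h.1]; omega⟩
  obtain ⟨j, hneg, hmin⟩ :
      ∃ j, weight t (w.take j) < 0 ∧ ∀ i < j, 0 ≤ weight t (w.take i) :=
    ⟨Nat.find hneg, Nat.find_spec hneg, fun i hi => not_lt.1 (Nat.find_min hneg hi)⟩
  have hj : weight t (w.take j) = -1 := by
    obtain ⟨i, rfl⟩ := Nat.exists_eq_add_one_of_ne_zero (n := j) fun h0 => by simp [h0] at hneg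
    have := weight_take_succ_ge (t := t) w i
    have := hmin i (by omega)
    omega
  refine ⟨w.take j, w.drop j, ⟨hj, fun i hi => ?_⟩, ⟨?_, fun i hi => ?_⟩,
    List.take_append_drop j w⟩
  · rw [List.length_take] at hi
    rw [List.take_take, min_eq_left (by omega : i ≤ j)]
    have := hmin i (by omega)
    push_cast
    omega
  · have := weight_append (t := t) (w.take j) (w.drop j)
    rw [List.take_append_drop, h.1, hj] at this
    push_cast at this ⊢
    omega
  · have := h.2 (j + i) (by rw [List.length_drop] at hi; omega)
    rw [List.take_add, weight_append, hj] at this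
    push_cast at this ⊢
    omega

lemma IsCode.eq_of_append_eq (hB : IsCode t 1 B) (hC : IsCode t 1 C) (h : B ++ u = C ++ v) :
    B = C := by
  wlog hle : B.length ≤ C.length generalizing B C u v
  · exact (this hC hB h.symm (by omega)).symm
  have hBC : C.take B.length = B := by
    simpa [List.take_append_of_le_length hle] using congrArg (List.take B.length) h.symm
  rcases hle.lt_or_eq with hlt | heq
  · simpa [hBC, hB.1] using hC.2 _ hlt
  · rw [heq, List.take_length] at hBC
    exact hBC.symm

lemma isCode_flatten_ofFn {Bs : Fin k → List Bool} (h : ∀ i, IsCode t 1 (Bs i)) :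
    IsCode t k (List.ofFn Bs).flatten := by
  induction k with
  | zero => simp [isCode_zero_iff]
  | succ k ih =>
    rw [List.ofFn_succ, List.flatten_cons]
    exact (h 0).append (ih fun i => h i.succ)

lemma IsCode.exists_eq_flatten_ofFn (h : IsCode t k w) :
    ∃ Bs : Fin k → List Bool, (∀ i, IsCode t 1 (Bs i)) ∧ (List.ofFn Bs).flatten = w := by
  induction k generalizing w with
  | zero => exact ⟨Fin.elim0, fun i => i.elim0, by simp [isCode_zero_iff.1 h]⟩
  | succ k ih =>
    obtain ⟨B, u, hB, hu, rfl⟩ := h.exists_append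
    obtain ⟨Bs, hBs, rfl⟩ := ih hu
    exact ⟨Fin.cons B Bs, Fin.cases hB hBs, by simp [List.ofFn_succ]⟩

lemma eq_of_flatten_ofFn_eq {Bs Cs : Fin k → List Bool} (hB : ∀ i, IsCode t 1 (Bs i))
    (hC : ∀ i, IsCode t 1 (Cs i)) (h : (List.ofFn Bs).flatten = (List.ofFn Cs).flatten) :
    Bs = Cs := by
  induction k with
  | zero => exact funext fun i => i.elim0
  | succ k ih =>
    simp only [List.ofFn_succ, List.flatten_cons] at h
    have h0 := (hB 0).eq_of_append_eq (hC 0) h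
    rw [h0, List.append_cancel_left_eq] at h
    have htail := ih (fun i => hB i.succ) (fun i => hC i.succ) h
    exact funext fun i => Fin.cases h0 (congrFun htail) i

lemma exists_isCode_rotate (hw : weight t w = -1) : ∃ r < w.length, IsCode t 1 (w.rotate r) := by
  obtain ⟨m, hm, hmin⟩ := (Finset.range (w.length + 1)).exists_min_image
    (fun j => weight t (w.take j)) ⟨0, by simp⟩
  replace hmin : ∀ j, weight t (w.take m) ≤ weight t (w.take j) := fun j => by
    simpa [← List.take_eq_take_min] using hmin (min j w.length) (by simp)
  have hex : ∃ r, weight t (w.take r) = weight t (w.take m) := ⟨m, rfl⟩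
  obtain ⟨r, hrm, hr, hfirst⟩ : ∃ r ≤ m, weight t (w.take r) = weight t (w.take m) ∧
      ∀ i < r, weight t (w.take r) < weight t (w.take i) :=
    ⟨Nat.find hex, Nat.find_min' hex rfl, Nat.find_spec hex, fun i hi =>
      (Nat.find_spec hex).symm ▸ lt_of_le_of_ne (hmin i) (Ne.symm (Nat.find_min hex hi))⟩
  have hlen : 0 < w.length := List.length_pos_of_ne_nil (by rintro rfl; simp at hw)
  -- rotate so that the word starts at the first minimum of its prefix weights
  refine ⟨r % w.length, Nat.mod_lt _ hlen, ?_⟩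
  rw [List.rotate_mod]
  refine ⟨by rw [weight_rotate, hw]; rfl, fun j hj => ?_⟩
  rw [List.length_rotate] at hj
  rw [Finset.mem_range] at hm
  rw [weight_take_rotate (by omega) hj.le]
  rcases le_or_gt (r + j) w.length with hle | hgt
  · have := hmin (r + j)
    rw [Nat.sub_eq_zero_of_le (by omega : j + r ≤ w.length), List.take_zero, weight_nil]
    omega
  · have := hfirst (j + r - w.length) (by omega)
    rw [List.take_of_length_le (by omega : w.length ≤ r + j), hw]
    omega

lemma IsCode.eq_zero_of_isCode_rotate (hv : IsCode t 1 v) {s : ℕ} (hs : s < v.length)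
    (hrot : IsCode t 1 (v.rotate s)) : s = 0 := by
  by_contra h0
  have := hrot.2 (v.length - s) (by simp; omega)
  rw [weight_take_rotate hs.le (by omega), Nat.add_sub_cancel' hs.le, List.take_length, hv.1,
    show v.length - s + s - v.length = 0 by omega, List.take_zero, weight_nil] at this
  have := hv.2 s hs
  omega

lemma eq_of_isCode_rotate {r r' : ℕ} (hr : r < w.length) (hr' : r' < w.length)
    (h : IsCode t 1 (w.rotate r)) (h' : IsCode t 1 (w.rotate r')) : r = r' := by
  wlog hle : r ≤ r' generalizing r r'
  · exact (this hr' hr h' h (by omega)).symm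
  have := h.eq_zero_of_isCode_rotate (s := r' - r) (by simp; omega)
    (by rwa [List.rotate_rotate, Nat.add_sub_cancel' hle])
  omega

lemma card_length_count_eq_card_isCode_mul (t n : ℕ) :
    Nat.card {w : List Bool // w.length = t * n + 1 ∧ w.count true = n} =
      Nat.card {w : List Bool // w.count true = n ∧ IsCode t 1 w} * (t * n + 1) := by
  set m := t * n + 1
  have hlength {w : List Bool} (hw : w.count true = n ∧ IsCode t 1 w) : w.length = m := by
    rw [hw.2.length_eq, hw.1]
  let f : {w : List Bool // w.count true = n ∧ IsCode t 1 w} × Fin m →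
      {w : List Bool // w.length = m ∧ w.count true = n} := fun p =>
    ⟨p.1.1.rotate (m - p.2), by simp [hlength p.1.2],
      by simp [(List.rotate_perm _ _).count_eq, p.1.2.1]⟩
  have hf : Function.Bijective f := by
    refine ⟨fun ⟨⟨v, hv⟩, r⟩ ⟨⟨v', hv'⟩, r'⟩ h => ?_, fun ⟨w, hw, hn⟩ => ?_⟩
    · have h : v.rotate (m - r) = v'.rotate (m - r') := congrArg Subtype.val h
      have hback : (v.rotate (m - r)).rotate r = v :=
        List.rotate_rotate_of_add_eq_length (by rw [hlength hv]; omega)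
      have hback' : (v.rotate (m - r)).rotate r' = v' :=
        h ▸ List.rotate_rotate_of_add_eq_length (by rw [hlength hv']; omega)
      have hrr : r = r' := Fin.ext <| eq_of_isCode_rotate (by simp [hlength hv])
        (by simp [hlength hv]) (hback ▸ hv.2) (hback' ▸ hv'.2)
      subst hrr
      simp only [Prod.mk.injEq, Subtype.mk.injEq, and_true]
      exact hback.symm.trans hback'
    · have hweight : weight t w = -1 := by simp only [weight, hw, hn, m]; push_cast; ring
      obtain ⟨r, hr, hcode⟩ := exists_isCode_rotate hweight
      refine ⟨⟨⟨w.rotate r, by simp [(List.rotate_perm _ _).count_eq, hn], hcode⟩,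
        ⟨r, hw ▸ hr⟩⟩, Subtype.ext (List.rotate_rotate_of_add_eq_length (by simp; omega))⟩
  rw [← Nat.card_eq_of_bijective f hf, Nat.card_prod, Nat.card_eq_fintype_card (α := Fin m),
    Fintype.card_fin]

end Lukasiewicz

namespace TAry

open Lukasiewicz

variable {t : ℕ}

def encode : TAry t → List Bool
  | nil => [false]
  | node c => true :: (List.ofFn fun i => (c i).encode).flatten

lemma count_encode (T : TAry t) : T.encode.count true = T.size := by
  induction T with
  | nil => simp [encode, size]
  | node c ih =>
    simp [encode, size, List.count_flatten, List.map_ofFn, Function.comp_def, List.sum_ofFn, ih,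
      add_comm]

lemma isCode_encode (T : TAry t) : IsCode t 1 T.encode := by
  induction T with
  | nil => exact isCode_false_cons_iff.2 rfl
  | node c ih => exact isCode_true_cons_iff.2 (isCode_flatten_ofFn ih)

lemma encode_injective : Function.Injective (encode : TAry t → List Bool)
  | nil, nil, _ => rfl
  | nil, node _, h => by simp [encode] at h
  | node _, nil, h => by simp [encode] at h
  | node c, node c', h => by
    simp only [encode, List.cons.injEq, true_and] at h
    have := eq_of_flatten_ofFn_eq (fun i => isCode_encode _) (fun i => isCode_encode _) h
    exact congrArg node (funext fun i => encode_injective (congrFun this i))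

lemma exists_encode_eq {w : List Bool} (h : IsCode t 1 w) : ∃ T : TAry t, T.encode = w := by
  induction hl : w.length using Nat.strong_induction_on generalizing w with
  | _ N ih =>
    match w, h with
    | [], h => simp [IsCode] at h
    | false :: v, h => exact ⟨nil, by rw [isCode_false_cons_iff.1 h]; rfl⟩
    | true :: v, h =>
      obtain ⟨Bs, hBs, rfl⟩ := (isCode_true_cons_iff.1 h).exists_eq_flatten_ofFn
      have hshort (i : Fin t) : (Bs i).length < N := by
        have hmem : Bs i ∈ List.ofFn Bs := List.mem_ofFn.2 ⟨i, rfl⟩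
        have := (List.sublist_flatten_of_mem hmem).length_le
        rw [← hl, List.length_cons]
        omega
      choose c hc using fun i => ih _ (hshort i) (hBs i) rfl
      exact ⟨node c, by simp [encode, hc]⟩

lemma card_size_eq_card_isCode (t n : ℕ) :
    Nat.card {T : TAry t // T.size = n} =
      Nat.card {w : List Bool // w.count true = n ∧ IsCode t 1 w} := by
  refine Nat.card_eq_of_bijective
    (fun T => ⟨T.1.encode, by rw [count_encode, T.2], isCode_encode _⟩) ⟨?_, ?_⟩
  · exact fun T T' h => Subtype.ext (encode_injective (congrArg Subtype.val h))
  · rintro ⟨w, hn, hw⟩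
    obtain ⟨T, rfl⟩ := exists_encode_eq hw
    exact ⟨⟨T, (count_encode T).symm.trans hn⟩, rfl⟩

end TAry

/-- The number of `t`-ary trees with `n` nodes equals `(1/((t-1)n+1)) * binomial(tn, n)`
(the division is exact). -/
theorem stmt0 (t n : ℕ) (ht : 1 < t) :
    Nat.card {T : TAry t // T.size = n} = Nat.choose (t * n) n / ((t - 1) * n + 1) := by
  have hcycle : Nat.card {T : TAry t // T.size = n} * (t * n + 1) = (t * n + 1).choose n := by
    rw [TAry.card_size_eq_card_isCode, ← Lukasiewicz.card_length_count_eq_card_isCode_mul,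
      card_length_count_eq_choose]
  have hsub : t * n + 1 - n = (t - 1) * n + 1 := by
    rw [Nat.sub_mul, one_mul]
    have : n ≤ t * n := Nat.le_mul_of_pos_left n (by omega)
    omega
  have hchoose : (t * n).choose n = Nat.card {T : TAry t // T.size = n} * ((t - 1) * n + 1) := by
    apply Nat.eq_of_mul_eq_mul_right (by omega : 0 < t * n + 1)
    rw [Nat.choose_mul_succ_eq, hsub, ← hcycle]
    ring
  rw [hchoose, Nat.mul_div_cancel _ (by omega)]
end

section
/- For every t-ary tree T with n ≥ 2 nodes whose profile satisfies D_j > 1 for some j, there exists a t-ary tree with n nodes whose path length is exactly one more than that of T. -/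
namespace TAry
variable {t : ℕ}

lemma comp_update (g : TAry t → ℕ) (c : Fin t → TAry t) (a : Fin t) (A : TAry t) :
    (fun i => g (Function.update c a A i)) = Function.update (fun i => g (c i)) a (g A) := by
  funext i
  simp [Function.update_apply, apply_ite g]

lemma sum_update (g : TAry t → ℕ) (c : Fin t → TAry t) (a : Fin t) (A : TAry t) :
    (∑ i, g (Function.update c a A i)) + g (c a) = (∑ i, g (c i)) + g A := by
  rw [comp_update, Finset.sum_update_of_mem (Finset.mem_univ a)]
  rw [← Finset.add_sum_erase _ (fun i => g (c i)) (Finset.mem_univ a)]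
  rw [Finset.sdiff_singleton_eq_erase]
  omega

lemma sum_update2 (g : TAry t → ℕ) (c : Fin t → TAry t) (a b : Fin t) (hab : a ≠ b)
    (A B : TAry t) :
    (∑ i, g (Function.update (Function.update c a A) b B i)) + (g (c a) + g (c b))
      = (∑ i, g (c i)) + (g A + g B) := by
  have h1 := sum_update g (Function.update c a A) b B
  have h2 := sum_update g c a A
  rw [Function.update_of_ne (Ne.symm hab)] at h1
  omega

lemma single_le_univ_sum (f : Fin t → ℕ) (a : Fin t) : f a ≤ ∑ i, f i :=
  Finset.single_le_sum (fun k _ => Nat.zero_le _) (Finset.mem_univ a)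

lemma lt_size_of_depthCount_ne_zero (T : TAry t) :
    ∀ j, depthCount j T ≠ 0 → j < T.size := by
  induction T with
  | nil => intro j h; simp [depthCount] at h
  | node c ih =>
    intro j h
    match j with
    | 0 => simp only [size]; omega
    | j + 1 =>
      simp only [depthCount] at h
      obtain ⟨i, _, hi⟩ := Finset.exists_ne_zero_of_sum_ne_zero h
      have h1 := ih i j hi
      have h2 : (c i).size ≤ ∑ k, (c k).size := single_le_univ_sum (fun k => (c k).size) i
      simp only [size]
      omega

lemma insert_lemma (ht : 2 ≤ t) (T : TAry t) :
    ∀ j, depthCount j T ≠ 0 → depthCount (j + 1) T ≤ 1 →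
      ∃ T' : TAry t, T'.size = T.size + 1 ∧ ∀ d, plFrom T' d = plFrom T d + (d + j + 1) := by
  induction T with
  | nil => intro j h; simp [depthCount] at h
  | node c ih =>
    intro j h1 h2
    match j with
    | 0 =>
      simp only [depthCount] at h2
      have hnil : ∃ i, c i = nil := by
        by_contra hc
        push_neg at hc
        have : ∀ i, depthCount 0 (c i) = 1 := by
          intro i
          cases hci : c i with
          | nil => exact absurd hci (hc i)
          | node c' => simp [depthCount]
        rw [Finset.sum_congr rfl (fun i _ => this i), Finset.sum_const, Finset.card_univ,
          Fintype.card_fin, smul_eq_mul, mul_one] at h2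
        omega
      obtain ⟨a, ha⟩ := hnil
      refine ⟨node (Function.update c a (node fun _ => nil)), ?_, ?_⟩
      · have := sum_update size c a (node fun _ => nil)
        rw [ha] at this
        simp only [size, Finset.sum_const_zero] at this ⊢
        omega
      · intro d
        have := sum_update (fun S => plFrom S (d + 1)) c a (node fun _ => nil)
        rw [ha] at this
        simp only [plFrom, Finset.sum_const_zero] at this ⊢
        omega
    | j + 1 =>
      simp only [depthCount] at h1 h2
      obtain ⟨a, _, ha⟩ := Finset.exists_ne_zero_of_sum_ne_zero h1
      have ha2 : depthCount (j + 1) (c a) ≤ 1 :=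
        le_trans (single_le_univ_sum (fun k => depthCount (j + 1) (c k)) a) h2
      obtain ⟨B, hB1, hB2⟩ := ih a j ha ha2
      refine ⟨node (Function.update c a B), ?_, ?_⟩
      · have := sum_update size c a B
        simp only [size] at this ⊢
        omega
      · intro d
        have := sum_update (fun S => plFrom S (d + 1)) c a B
        have h3 := hB2 (d + 1)
        simp only [plFrom] at this ⊢
        omega

lemma remove_lemma (T : TAry t) :
    ∀ j, depthCount j T ≠ 0 → depthCount (j + 1) T = 0 →
      ∃ T' : TAry t, T'.size + 1 = T.size ∧ ∀ d, plFrom T' d + (d + j) = plFrom T d := by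
  induction T with
  | nil => intro j h; simp [depthCount] at h
  | node c ih =>
    intro j h1 h2
    match j with
    | 0 =>
      simp only [depthCount, Finset.sum_eq_zero_iff, Finset.mem_univ, true_implies] at h2
      have hnil : ∀ i, c i = nil := by
        intro i
        cases hci : c i with
        | nil => rfl
        | node c' => have := h2 i; rw [hci] at this; simp [depthCount] at this
      refine ⟨nil, ?_, ?_⟩
      · simp only [size]
        rw [Finset.sum_congr rfl (fun i _ => by rw [hnil i])]
        simp [size]
      · intro d
        simp only [plFrom]
        rw [Finset.sum_congr rfl (fun i _ => by rw [hnil i])]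
        simp [plFrom]
    | j + 1 =>
      simp only [depthCount] at h1 h2
      rw [Finset.sum_eq_zero_iff] at h2
      obtain ⟨a, _, ha⟩ := Finset.exists_ne_zero_of_sum_ne_zero h1
      obtain ⟨A, hA1, hA2⟩ := ih a j ha (h2 a (Finset.mem_univ a))
      refine ⟨node (Function.update c a A), ?_, ?_⟩
      · have := sum_update size c a A
        simp only [size] at this ⊢
        omega
      · intro d
        have := sum_update (fun S => plFrom S (d + 1)) c a A
        have h3 := hA2 (d + 1)
        simp only [plFrom] at this ⊢
        omega

lemma combine_lemma (ht : 2 ≤ t) (c : Fin t → TAry t) (a b : Fin t) (hab : a ≠ b) (j : ℕ)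
    (ha1 : depthCount j (c a) ≠ 0) (ha2 : depthCount (j + 1) (c a) = 0)
    (hb1 : depthCount j (c b) ≠ 0) (hb2 : depthCount (j + 1) (c b) ≤ 1) :
    ∃ T' : TAry t, T'.size = (node c).size ∧ ∀ d, plFrom T' d = plFrom (node c) d + 1 := by
  obtain ⟨A, hA1, hA2⟩ := remove_lemma (c a) j ha1 ha2
  obtain ⟨B, hB1, hB2⟩ := insert_lemma ht (c b) j hb1 hb2
  refine ⟨node (Function.update (Function.update c a A) b B), ?_, ?_⟩
  · have := sum_update2 size c a b hab A B
    simp only [size] at this ⊢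
    omega
  · intro d
    have := sum_update2 (fun S => plFrom S (d + 1)) c a b hab A B
    have h3 := hA2 (d + 1)
    have h4 := hB2 (d + 1)
    simp only [plFrom] at this ⊢
    omega

lemma move_lemma (ht : 2 ≤ t) (T : TAry t) :
    ∀ j, 2 ≤ depthCount j T → depthCount (j + 1) T ≤ 1 →
      ∃ T' : TAry t, T'.size = T.size ∧ ∀ d, plFrom T' d = plFrom T d + 1 := by
  induction T with
  | nil => intro j h; simp [depthCount] at h
  | node c ih =>
    intro j h1 h2
    match j with
    | 0 => simp [depthCount] at h1
    | j + 1 =>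
      simp only [depthCount] at h1 h2
      by_cases hbig : ∃ i, 2 ≤ depthCount j (c i)
      · obtain ⟨a, ha⟩ := hbig
        have ha2 : depthCount (j + 1) (c a) ≤ 1 :=
          le_trans (single_le_univ_sum (fun k => depthCount (j + 1) (c k)) a) h2
        obtain ⟨B, hB1, hB2⟩ := ih a j ha ha2
        refine ⟨node (Function.update c a B), ?_, ?_⟩
        · have := sum_update size c a B
          simp only [size] at this ⊢
          omega
        · intro d
          have := sum_update (fun S => plFrom S (d + 1)) c a B
          have h3 := hB2 (d + 1)
          simp only [plFrom] at this ⊢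
          omega
      · push_neg at hbig
        -- get two distinct indices with nonzero depthCount j
        have h1' : (∑ i, depthCount j (c i)) ≠ 0 := by omega
        obtain ⟨a, _, ha⟩ := Finset.exists_ne_zero_of_sum_ne_zero h1'
        have hrest : (∑ i ∈ Finset.univ.erase a, depthCount j (c i)) ≠ 0 := by
          have hsplit : depthCount j (c a) + (∑ i ∈ Finset.univ.erase a, depthCount j (c i))
              = ∑ i, depthCount j (c i) :=
            Finset.add_sum_erase _ (fun i => depthCount j (c i)) (Finset.mem_univ a)
          have hba := hbig a
          omega
        obtain ⟨b, hbmem, hb⟩ := Finset.exists_ne_zero_of_sum_ne_zero hrest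
        have hba : b ≠ a := Finset.ne_of_mem_erase hbmem
        have hpair : depthCount (j + 1) (c a) + depthCount (j + 1) (c b) ≤ 1 := by
          have hs2 : (∑ i ∈ ({a, b} : Finset (Fin t)), depthCount (j + 1) (c i))
              ≤ ∑ i, depthCount (j + 1) (c i) :=
            Finset.sum_le_sum_of_subset (Finset.subset_univ _)
          have hs3 : (∑ i ∈ ({a, b} : Finset (Fin t)), depthCount (j + 1) (c i))
              = depthCount (j + 1) (c a) + depthCount (j + 1) (c b) :=
            Finset.sum_pair (Ne.symm hba)
          omega
        by_cases hza : depthCount (j + 1) (c a) = 0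
        · exact combine_lemma ht c a b (Ne.symm hba) j ha hza hb (by omega)
        · exact combine_lemma ht c b a hba j hb (by omega) ha (by omega)

end TAry

/-- If a `t`-ary tree `T` with `n ≥ 2` nodes has more than one node at some depth,
then there is a `t`-ary tree with `n` nodes whose path length is `pathLength T + 1`. -/
theorem stmt7 (t n : ℕ) (ht : 2 ≤ t) (hn : 2 ≤ n) (T : TAry t) (hsize : T.size = n)
    (hD : ∃ j, 1 < TAry.depthCount j T) :
    ∃ T' : TAry t, T'.size = n ∧ T'.pathLength = T.pathLength + 1 := by
  classical
  obtain ⟨j0, hj0⟩ := hD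
  have hj0' : j0 ≤ T.size :=
    le_of_lt (TAry.lt_size_of_depthCount_ne_zero T j0 (by omega))
  set P : ℕ → Prop := fun k => 2 ≤ TAry.depthCount k T with hP
  set j := Nat.findGreatest P T.size with hj
  have hjspec : 2 ≤ TAry.depthCount j T := Nat.findGreatest_spec (P := P) hj0' (show P j0 from hj0)
  have hnext : TAry.depthCount (j + 1) T ≤ 1 := by
    by_cases hle : j + 1 ≤ T.size
    · have hng : ¬ P (j + 1) := Nat.findGreatest_is_greatest (Nat.lt_succ_self j) hle
      rw [hP] at hng
      omega
    · by_contra hcon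
      have := TAry.lt_size_of_depthCount_ne_zero T (j + 1) (by omega)
      omega
  obtain ⟨T', h1, h2⟩ := TAry.move_lemma ht T j hjspec hnext
  exact ⟨T', by omega, h2 0⟩
end

section
/- For every t ≥ 2, every n ≥ 1, and every integer p with p_min(t,n) ≤ p ≤ n(n−1)/2, where p_min(t,n) is the minimal path length among t-ary trees with n nodes, there exists a t-ary tree with n nodes and path length exactly p. -/
/-!
A tree whose path length is below the maximum `C(n, 2)` can be reshaped, keeping its size, so
that its path length grows by exactly one; iterating from a tree of minimal path length reaches
every value in between. To reshape, descend to a node whose subtrees all have maximal path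
length but at least two of which are nonempty, of sizes `a ≥ b ≥ 1`. Replace the larger subtree
by a path of `a` nodes with an extra leaf at depth `b`, and the smaller one by a path of `b - 1`
nodes: the subtree path lengths change by `+b` and `-(b - 1)`, the subtree sizes by `+1` and
`-1`, so the path length of the node grows by one.
-/

theorem Nat.choose_two_succ (n : ℕ) : (n + 1).choose 2 = n.choose 2 + n := by
  rw [Nat.choose_succ_succ', Nat.choose_one_right, add_comm]

theorem Nat.choose_two_add_le (a b : ℕ) : a.choose 2 + b.choose 2 ≤ (a + b).choose 2 := by
  induction b with
  | zero => simp
  | succ b ih => rw [← add_assoc, Nat.choose_two_succ, Nat.choose_two_succ]; omega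

theorem Finset.sum_choose_two_le {ι : Type*} (s : Finset ι) (f : ι → ℕ) :
    ∑ i ∈ s, (f i).choose 2 ≤ (∑ i ∈ s, f i).choose 2 :=
  Finset.le_sum_of_subadditive (fun n : ℕ => OrderDual.toDual (n.choose 2)) le_rfl
    Nat.choose_two_add_le s f

theorem Fintype.sum_choose_two_eq_of_pairwise {ι : Type*} [Fintype ι] (f : ι → ℕ)
    (hf : ∀ i j, i ≠ j → f i = 0 ∨ f j = 0) :
    ∑ i, (f i).choose 2 = (∑ i, f i).choose 2 := by
  by_cases hk : ∃ k, f k ≠ 0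
  · obtain ⟨k, hk⟩ := hk
    have hzero : ∀ j, j ≠ k → f j = 0 := fun j hj => (hf k j hj.symm).resolve_left hk
    rw [Finset.sum_eq_single k (fun j _ hj => by simp [hzero j hj]) (by simp),
      Finset.sum_eq_single k (fun j _ hj => hzero j hj) (by simp)]
  · push Not at hk
    simp [hk]

theorem Fintype.sum_comp_update {ι α M : Type*} [Fintype ι] [DecidableEq ι] [AddCommMonoid M]
    (g : α → M) (c : ι → α) (i : ι) (x : α) :
    ∑ j, g (Function.update c i x j) + g (c i) = ∑ j, g (c j) + g x := by
  simp only [← Function.comp_apply (f := g), Function.comp_update,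
    Finset.sum_update_of_mem (Finset.mem_univ i),
    Finset.sum_eq_sum_sdiff_singleton_add (Finset.mem_univ i) (g ∘ c)]
  abel

namespace TAry

open Function

variable {t : ℕ}

@[simp] theorem size_nil : (nil : TAry t).size = 0 := rfl

@[simp] theorem pathLength_nil : (nil : TAry t).pathLength = 0 := rfl

theorem size_node (c : Fin t → TAry t) : (node c).size = 1 + ∑ i, (c i).size := rfl

theorem plFrom_eq_pathLength_add_mul : ∀ (T : TAry t) (d : ℕ), T.plFrom d = T.pathLength + d * T.size
  | nil, d => by simp [plFrom, pathLength]
  | node c, d => by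
    simp only [pathLength, plFrom, size, Finset.sum_congr rfl fun i _ => plFrom_eq_pathLength_add_mul (c i) (d + 1),
      Finset.sum_congr rfl fun i _ => plFrom_eq_pathLength_add_mul (c i) 1, Finset.sum_add_distrib, ← Finset.mul_sum]
    ring

theorem pathLength_node (c : Fin t → TAry t) :
    (node c).pathLength = ∑ i, (c i).pathLength + ∑ i, (c i).size := by
  simp [pathLength, plFrom, plFrom_eq_pathLength_add_mul _ 1, Finset.sum_add_distrib]

theorem size_node_update (c : Fin t → TAry t) (i : Fin t) (X : TAry t) :
    (node (update c i X)).size + (c i).size = (node c).size + X.size := by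
  simp only [size_node, add_assoc, Fintype.sum_comp_update size c i X]

theorem pathLength_node_update (c : Fin t → TAry t) (i : Fin t) (X : TAry t) :
    (node (update c i X)).pathLength + (c i).pathLength + (c i).size =
      (node c).pathLength + X.pathLength + X.size := by
  have hpl := Fintype.sum_comp_update pathLength c i X
  have hsize := Fintype.sum_comp_update size c i X
  simp only [pathLength_node]
  omega

theorem pathLength_le_choose_two (T : TAry t) : T.pathLength ≤ T.size.choose 2 := by
  induction T with
  | nil => simp
  | node c ih =>
    calc (node c).pathLength = ∑ i, (c i).pathLength + ∑ i, (c i).size := pathLength_node c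
      _ ≤ ∑ i, (c i).size.choose 2 + ∑ i, (c i).size := by gcongr with i; exact ih i
      _ ≤ (∑ i, (c i).size).choose 2 + ∑ i, (c i).size := by
        gcongr; exact Finset.sum_choose_two_le _ _
      _ = (node c).size.choose 2 := by rw [size_node, add_comm 1, Nat.choose_two_succ]

@[simp] theorem size_node_nil : (node fun _ => nil : TAry t).size = 1 := by simp [size_node]

@[simp] theorem pathLength_node_nil : (node fun _ => nil : TAry t).pathLength = 0 := by
  simp [pathLength_node]

def path (i : Fin t) : ℕ → TAry t
  | 0 => nil
  | n + 1 => node (update (fun _ => nil) i (path i n))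

theorem path_succ (i : Fin t) (n : ℕ) :
    path i (n + 1) = node (update (fun _ => nil) i (path i n)) := rfl

theorem size_path (i : Fin t) (n : ℕ) : (path i n).size = n := by
  induction n with
  | zero => rfl
  | succ n ih =>
    have h := size_node_update (fun _ => nil) i (path i n)
    rw [size_nil, size_node_nil, ih, ← path_succ] at h
    omega

theorem pathLength_path (i : Fin t) (n : ℕ) : (path i n).pathLength = n.choose 2 := by
  induction n with
  | zero => rfl
  | succ n ih =>
    have h := pathLength_node_update (fun _ => nil) i (path i n)
    rw [pathLength_nil, size_nil, pathLength_node_nil, ih, size_path, ← path_succ] at h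
    rw [Nat.choose_two_succ]
    omega

def pathWithLeaf (i j : Fin t) : ℕ → ℕ → TAry t
  | 0, _ => nil
  | a + 1, 0 => node (update (update (fun _ => nil) i (path i a)) j (node fun _ => nil))
  | a + 1, b + 1 => node (update (fun _ => nil) i (pathWithLeaf i j a b))

theorem size_pathWithLeaf {i j : Fin t} (hij : i ≠ j) {a b : ℕ} (hb : b < a) :
    (pathWithLeaf i j a b).size = a + 1 := by
  induction a generalizing b with
  | zero => omega
  | succ a ih =>
    cases b with
    | zero =>
      have h := size_node_update (update (fun _ => nil) i (path i a)) j (node fun _ => nil)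
      rw [update_of_ne hij.symm, ← path_succ, size_path, size_nil, size_node_nil] at h
      simp only [pathWithLeaf]
      omega
    | succ b =>
      have h := size_node_update (fun _ => nil) i (pathWithLeaf i j a b)
      simp only [size_nil, size_node_nil, ih (by omega : b < a)] at h
      simp only [pathWithLeaf]
      omega

theorem pathLength_pathWithLeaf {i j : Fin t} (hij : i ≠ j) {a b : ℕ} (hb : b < a) :
    (pathWithLeaf i j a b).pathLength = a.choose 2 + b + 1 := by
  induction a generalizing b with
  | zero => omega
  | succ a ih =>
    cases b with
    | zero =>
      have h := pathLength_node_update (update (fun _ => nil) i (path i a)) j (node fun _ => nil)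
      rw [update_of_ne hij.symm, ← path_succ, pathLength_path, pathLength_nil, size_nil,
        pathLength_node_nil, size_node_nil] at h
      simp only [pathWithLeaf]
      omega
    | succ b =>
      have h := pathLength_node_update (fun _ => nil) i (pathWithLeaf i j a b)
      simp only [pathLength_nil, size_nil, pathLength_node_nil, ih (by omega : b < a),
        size_pathWithLeaf hij (by omega : b < a)] at h
      simp only [pathWithLeaf, Nat.choose_two_succ]
      omega

theorem exists_node_pathLength_succ {c : Fin t → TAry t} {i j : Fin t} (hij : i ≠ j)
    (hj : 0 < (c j).size) (hji : (c j).size ≤ (c i).size)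
    (hi_max : (c i).pathLength = (c i).size.choose 2)
    (hj_max : (c j).pathLength = (c j).size.choose 2) :
    ∃ T : TAry t, T.size = (node c).size ∧ T.pathLength = (node c).pathLength + 1 := by
  obtain ⟨b, hb⟩ := Nat.exists_eq_add_one_of_ne_zero hj.ne'
  have hba : b < (c i).size := by omega
  have hX := size_pathWithLeaf hij hba
  have hX' := pathLength_pathWithLeaf hij hba
  generalize pathWithLeaf i j (c i).size b = X at hX hX'
  have hsize₁ := size_node_update c i X
  have hpl₁ := pathLength_node_update c i X
  have hsize₂ := size_node_update (update c i X) j (path i b)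
  have hpl₂ := pathLength_node_update (update c i X) j (path i b)
  rw [update_of_ne hij.symm] at hsize₂ hpl₂
  have hpath := size_path i b
  have hpath' := pathLength_path i b
  have hchoose := Nat.choose_two_succ b
  rw [hb] at hj_max
  exact ⟨node (update (update c i X) j (path i b)), by omega, by omega⟩

theorem exists_ne_size_pos_of_pathLength_lt {c : Fin t → TAry t}
    (hmax : ∀ i, (c i).pathLength = (c i).size.choose 2)
    (h : (node c).pathLength < (node c).size.choose 2) :
    ∃ i j, i ≠ j ∧ 0 < (c i).size ∧ 0 < (c j).size := by
  by_contra! hne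
  have hsum : ∑ i, (c i).pathLength = (∑ i, (c i).size).choose 2 := by
    simp only [hmax]
    refine Fintype.sum_choose_two_eq_of_pairwise _ fun i j hij => ?_
    have := hne i j hij
    omega
  rw [pathLength_node, size_node, add_comm 1, Nat.choose_two_succ] at h
  omega

theorem exists_pathLength_succ (T : TAry t) (h : T.pathLength < T.size.choose 2) :
    ∃ T' : TAry t, T'.size = T.size ∧ T'.pathLength = T.pathLength + 1 := by
  induction T with
  | nil => simp at h
  | node c ih =>
    by_cases hmax : ∀ i, (c i).pathLength = (c i).size.choose 2
    · obtain ⟨i, j, hij, hi, hj⟩ := exists_ne_size_pos_of_pathLength_lt hmax h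
      rcases le_total (c j).size (c i).size with hle | hle
      · exact exists_node_pathLength_succ hij hj hle (hmax i) (hmax j)
      · exact exists_node_pathLength_succ hij.symm hi hle (hmax j) (hmax i)
    · push Not at hmax
      obtain ⟨i, hi⟩ := hmax
      obtain ⟨T', hsize, hpl⟩ := ih i ((pathLength_le_choose_two _).lt_of_ne hi)
      have hsize' := size_node_update c i T'
      have hpl' := pathLength_node_update c i T'
      exact ⟨node (update c i T'), by omega, by omega⟩

theorem exists_pathLength_add (k : ℕ) (T : TAry t) (h : T.pathLength + k ≤ T.size.choose 2) :
    ∃ T' : TAry t, T'.size = T.size ∧ T'.pathLength = T.pathLength + k := by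
  induction k with
  | zero => exact ⟨T, rfl, rfl⟩
  | succ k ih =>
    obtain ⟨T', hsize, hpl⟩ := ih (by omega)
    obtain ⟨T'', hsize', hpl'⟩ := exists_pathLength_succ T' (by rw [hsize]; omega)
    exact ⟨T'', hsize'.trans hsize, by omega⟩

end TAry

theorem stmt8_general (t n p : ℕ) (ht : 2 ≤ t)
    (hlo : sInf {p | ∃ T : TAry t, T.size = n ∧ T.pathLength = p} ≤ p)
    (hhi : p ≤ n * (n - 1) / 2) :
    ∃ T : TAry t, T.size = n ∧ T.pathLength = p := by
  set S := {p | ∃ T : TAry t, T.size = n ∧ T.pathLength = p}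
  have hS : S.Nonempty := ⟨_, TAry.path ⟨0, by omega⟩ n, TAry.size_path _ n, rfl⟩
  obtain ⟨T₀, hsize, hpl⟩ := Nat.sInf_mem hS
  rw [← Nat.choose_two_right] at hhi
  obtain ⟨T, hTsize, hTpl⟩ := TAry.exists_pathLength_add (p - sInf S) T₀ (by rw [hsize]; omega)
  exact ⟨T, hTsize.trans hsize, by omega⟩

/-- For every `p` between the minimal path length of a `t`-ary tree with `n` nodes and
the maximal one `n(n-1)/2`, there is a `t`-ary tree with `n` nodes and path length `p`. -/
theorem stmt8 (t n p : ℕ) (ht : 2 ≤ t) (hn : 1 ≤ n)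
    (hlo : sInf {p | ∃ T : TAry t, T.size = n ∧ T.pathLength = p} ≤ p)
    (hhi : p ≤ n * (n - 1) / 2) :
    ∃ T : TAry t, T.size = n ∧ T.pathLength = p :=
  stmt8_general t n p ht hlo hhi
end

section
/- A t-ary tree with ℓ ≥ 1 leaves that has minimal path length among all t-ary trees with ℓ leaves has exactly ℓ + ⌈(ℓ−1)/(t−1)⌉ nodes. -/
/-!
Let `deg v` be the number of nonempty children of a node and call `t - deg v`, summed over the
internal nodes, the slack of the tree. Counting edges gives
`slack + ℓ = (t - 1) · #internal + 1`, so the claim says exactly that a minimal tree has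
slack at most `t - 2`.

In a minimal tree no node has exactly one child (contract it), and no internal node with two
children lies deeper than a non-full internal node (move one of its subtrees up into the free
slot). Hence the non-full internal nodes all lie on one level and, if the slack were `≥ t - 1`,
there would be two of them. Moving a child from the one of smaller degree to the other keeps the
leaves, the path length and the slack, and strictly decreases `∑ deg v · (t - deg v)`; induction
on this potential gives the bound.
-/

open Finset Function

lemma Fintype.exists_ne_of_lt_sum {ι : Type*} [Fintype ι] {f : ι → ℕ} {B : ℕ}
    (hf : ∀ i, f i ≤ B) (h : B < ∑ i, f i) : ∃ i j, i ≠ j ∧ 0 < f i ∧ 0 < f j := by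
  obtain ⟨i, -, hi⟩ := sum_pos_iff.1 (by omega : 0 < ∑ i, f i)
  by_contra! hne
  rw [Fintype.sum_eq_single i fun j hj => Nat.le_zero.1 (hne i j hj.symm hi)] at h
  exact (hf i).not_gt h

lemma Fintype.sum_apply_update_add {ι α M : Type*} [Fintype ι] [DecidableEq ι]
    [AddCommMonoid M] (f : α → M) (c : ι → α) (i : ι) (x : α) :
    ∑ j, f (update c i x j) + f (c i) = ∑ j, f (c j) + f x := by
  simp only [← comp_apply (f := f), comp_update]
  rw [sum_update_of_mem (mem_univ i), sum_eq_sum_sdiff_singleton_add (mem_univ i) (f ∘ c)]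
  rw [add_assoc, add_comm]

namespace TAry

variable {t : ℕ}

instance (X : TAry t) : Decidable (X = nil) :=
  match X with
  | nil => isTrue rfl
  | node _ => isFalse nofun

@[simp] lemma node_ne_nil (c : Fin t → TAry t) : node c ≠ nil := nofun

@[simp] lemma getAt_nil_right (T : TAry t) : getAt T [] = T := by cases T <;> rfl

@[simp] lemma getAt_nil_left (p : List (Fin t)) : getAt nil p = nil := by cases p <;> rfl

@[simp] lemma getAt_node_cons (c : Fin t → TAry t) (i : Fin t) (p : List (Fin t)) :
    getAt (node c) (i :: p) = getAt (c i) p := rfl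

@[simp] lemma replaceAt_nil_right (T τ : TAry t) : replaceAt T [] τ = τ := by cases T <;> rfl

lemma replaceAt_node_cons (c : Fin t → TAry t) (i : Fin t) (p : List (Fin t)) (τ : TAry t) :
    replaceAt (node c) (i :: p) τ = node (update c i (replaceAt (c i) p τ)) := by
  rw [replaceAt]
  congr 1
  funext j
  rw [update_apply]

lemma replaceAt_ne_nil {T τ : TAry t} {p : List (Fin t)} (hT : getAt T p ≠ nil)
    (hτ : τ ≠ nil) : replaceAt T p τ ≠ nil := by
  cases p with
  | nil => simpa using hτ
  | cons i p =>
    cases T with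
    | nil => simp at hT
    | node c => simp [replaceAt_node_cons]

lemma getAt_replaceAt_of_not_prefix {T τ : TAry t} {p q : List (Fin t)}
    {c : Fin t → TAry t} (hq : getAt T q ≠ nil) (hτ : τ ≠ nil) (hqp : ¬ q <+: p)
    (hp : getAt T p = node c) :
    ∃ c', getAt (replaceAt T q τ) p = node c' ∧ ∀ i, (c' i = nil ↔ c i = nil) := by
  induction p generalizing T q with
  | nil =>
    obtain _ | ⟨a, q⟩ := q
    · exact absurd List.nil_prefix hqp
    simp only [getAt_nil_right] at hp
    subst hp
    refine ⟨update c a (replaceAt (c a) q τ), replaceAt_node_cons .., fun i => ?_⟩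
    rcases eq_or_ne i a with rfl | hia
    · have hci : c i ≠ nil := fun h => hq (by simp [h])
      simp [replaceAt_ne_nil (T := c i) hq hτ, hci]
    · simp [hia]
  | cons b p ih =>
    obtain _ | ⟨a, q⟩ := q
    · exact absurd List.nil_prefix hqp
    cases T with
    | nil => simp at hp
    | node c₀ =>
      rw [replaceAt_node_cons, getAt_node_cons]
      rcases eq_or_ne b a with rfl | hba
      · simpa using ih (T := c₀ b) (q := q) hq (by simpa [List.cons_prefix_cons] using hqp) hp
      · exact ⟨c, by simpa [hba] using hp, fun _ => Iff.rfl⟩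

def deg (c : Fin t → TAry t) : ℕ := #{i | c i ≠ nil}

lemma deg_eq_sum (c : Fin t → TAry t) : deg c = ∑ i, if c i = nil then 0 else 1 := by
  simp only [deg, card_filter, ite_not]

lemma deg_le (c : Fin t → TAry t) : deg c ≤ t :=
  (card_filter_le _ _).trans (by simp)

lemma deg_eq_zero {c : Fin t → TAry t} : deg c = 0 ↔ ∀ i, c i = nil := by
  simp [deg, filter_eq_empty_iff]

lemma exists_ne_nil_of_deg_pos {c : Fin t → TAry t} (h : 0 < deg c) : ∃ i, c i ≠ nil := by
  by_contra! h'
  exact h.ne' (deg_eq_zero.2 h')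

lemma exists_eq_nil_of_deg_lt {c : Fin t → TAry t} (h : deg c < t) : ∃ i, c i = nil := by
  by_contra! h'
  simp [deg, h'] at h

lemma deg_congr {c c' : Fin t → TAry t} (h : ∀ i, c i = nil ↔ c' i = nil) : deg c = deg c' := by
  simp only [deg_eq_sum, h]

lemma deg_update_add (c : Fin t → TAry t) (i : Fin t) (x : TAry t) :
    deg (update c i x) + (if c i = nil then 0 else 1) = deg c + (if x = nil then 0 else 1) := by
  simp only [deg_eq_sum]
  exact Fintype.sum_apply_update_add (fun X => if X = nil then 0 else 1) c i x

def nodeSum (g : ℕ → ℕ → ℕ) : ℕ → TAry t → ℕ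
  | _, nil => 0
  | d, node c => g d (deg c) + ∑ i, nodeSum g (d + 1) (c i)

@[simp] lemma nodeSum_nil (g : ℕ → ℕ → ℕ) (d : ℕ) : nodeSum g d (nil : TAry t) = 0 := rfl

lemma nodeSum_node_update (g : ℕ → ℕ → ℕ) (d : ℕ) (c : Fin t → TAry t) (i : Fin t)
    (x : TAry t) :
    nodeSum g d (node (update c i x)) + nodeSum g (d + 1) (c i) + g d (deg c) =
      nodeSum g d (node c) + nodeSum g (d + 1) x + g d (deg (update c i x)) := by
  have := Fintype.sum_apply_update_add (nodeSum g (d + 1)) c i x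
  simp only [nodeSum]
  omega

lemma nodeSum_replaceAt (g : ℕ → ℕ → ℕ) {T τ : TAry t} {p : List (Fin t)}
    (hT : getAt T p ≠ nil) (hτ : τ ≠ nil) (d : ℕ) :
    nodeSum g d (replaceAt T p τ) + nodeSum g (d + p.length) (getAt T p) =
      nodeSum g d T + nodeSum g (d + p.length) τ := by
  induction p generalizing T d with
  | nil => simp [add_comm]
  | cons i p ih =>
    cases T with
    | nil => simp at hT
    | node c =>
      have hci : c i ≠ nil := fun h => hT (by simp [h])
      have hdeg := deg_update_add c i (replaceAt (c i) p τ)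
      have hupd := nodeSum_node_update g d c i (replaceAt (c i) p τ)
      have hchild := ih (T := c i) hT (d + 1)
      simp only [hci, replaceAt_ne_nil (T := c i) hT hτ, if_false] at hdeg
      rw [replaceAt_node_cons, getAt_node_cons, List.length_cons,
        show d + (p.length + 1) = d + 1 + p.length by omega]
      rw [add_right_cancel hdeg] at hupd
      omega

lemma nodeSum_node_of_deg_eq_one (g : ℕ → ℕ → ℕ) (d : ℕ) {c : Fin t → TAry t} {i : Fin t}
    (hc : deg c = 1) (hi : c i ≠ nil) :
    nodeSum g d (node c) = g d 1 + nodeSum g (d + 1) (c i) := by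
  have hrest : ∀ j ≠ i, c j = nil := by
    have h := deg_update_add c i nil
    simp only [hi, if_true, if_false, hc] at h
    intro j hj
    simpa [hj] using deg_eq_zero.1 (by omega : deg (update c i nil) = 0) j
  simp only [nodeSum, hc]
  rw [Fintype.sum_eq_single i fun j hj => by simp [hrest j hj]]

lemma plFrom_eq_nodeSum (T : TAry t) (d : ℕ) : T.plFrom d = nodeSum (fun e _ => e) d T := by
  induction T generalizing d with
  | nil => rfl
  | node c ih => simp [plFrom, nodeSum, ih]

lemma nodeSum_depth_add (T : TAry t) (d n : ℕ) :
    nodeSum (fun e _ => e) (d + n) T = nodeSum (fun e _ => e) d T + n * T.size := by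
  induction T generalizing d with
  | nil => simp [nodeSum, size]
  | node c ih =>
    simp only [nodeSum, size, show d + n + 1 = d + 1 + n by omega, ih, sum_add_distrib,
      mul_add, mul_sum]
    ring

def degSum (f : ℕ → ℕ) (T : TAry t) : ℕ := nodeSum (fun _ => f) 0 T

lemma nodeSum_eq_degSum (f : ℕ → ℕ) (d : ℕ) (T : TAry t) :
    nodeSum (fun _ => f) d T = degSum f T := by
  suffices ∀ e, nodeSum (fun _ => f) d T = nodeSum (fun _ => f) e T from this 0
  induction T generalizing d with
  | nil => simp [nodeSum]
  | node c ih =>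
    intro e
    simp only [nodeSum]
    exact congrArg _ (sum_congr rfl fun i _ => ih i (d + 1) (e + 1))

@[simp] lemma degSum_nil (f : ℕ → ℕ) : degSum f (nil : TAry t) = 0 := rfl

lemma degSum_node (f : ℕ → ℕ) (c : Fin t → TAry t) :
    degSum f (node c) = f (deg c) + ∑ i, degSum f (c i) := by
  rw [degSum, nodeSum]
  simp only [nodeSum_eq_degSum]

lemma exists_getAt_of_pos {f : ℕ → ℕ} {T : TAry t} (h : 0 < degSum f T) :
    ∃ p c, getAt T p = node c ∧ 0 < f (deg c) := by
  induction T with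
  | nil => simp at h
  | node c ih =>
    rw [degSum_node] at h
    by_cases hroot : 0 < f (deg c)
    · exact ⟨[], c, getAt_nil_right _, hroot⟩
    · obtain ⟨i, -, hi⟩ := sum_pos_iff.1 (by omega : 0 < ∑ i, degSum f (c i))
      obtain ⟨p, c', hp, hc'⟩ := ih i hi
      exact ⟨i :: p, c', hp, hc'⟩

lemma exists_two_getAt_of_lt {f : ℕ → ℕ} {B : ℕ} {T : TAry t}
    (hB : ∀ p c, getAt T p = node c → f (deg c) ≤ B) (h : B < degSum f T) :
    ∃ p q cp cq, p ≠ q ∧ getAt T p = node cp ∧ 0 < f (deg cp) ∧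
      getAt T q = node cq ∧ 0 < f (deg cq) := by
  induction T with
  | nil => simp at h
  | node c ih =>
    rw [degSum_node] at h
    have hroot := hB [] c (getAt_nil_right _)
    by_cases hr : 0 < f (deg c)
    · obtain ⟨i, -, hi⟩ := sum_pos_iff.1 (by omega : 0 < ∑ i, degSum f (c i))
      obtain ⟨p, c', hp, hc'⟩ := exists_getAt_of_pos hi
      exact ⟨[], i :: p, c, c', by simp, getAt_nil_right _, hr, hp, hc'⟩
    · by_cases hsmall : ∀ i, degSum f (c i) ≤ B
      · obtain ⟨i, j, hij, hi, hj⟩ := Fintype.exists_ne_of_lt_sum hsmall (by omega)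
        obtain ⟨p, cp, hp, hfp⟩ := exists_getAt_of_pos hi
        obtain ⟨q, cq, hq, hfq⟩ := exists_getAt_of_pos hj
        exact ⟨i :: p, j :: q, cp, cq, by simp [hij], hp, hfp, hq, hfq⟩
      · obtain ⟨i, hi⟩ := not_forall.1 hsmall
        obtain ⟨p, q, cp, cq, hpq, hp, hfp, hq, hfq⟩ :=
          ih i (fun p c' hp => hB (i :: p) c' hp) (not_le.1 hi)
        exact ⟨i :: p, i :: q, cp, cq, by simpa using hpq, hp, hfp, hq, hfq⟩

lemma one_le_leaves {T : TAry t} (hT : T ≠ nil) : 1 ≤ T.leaves := by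
  cases T with
  | nil => simp at hT
  | node c => exact le_max_left _ _

lemma one_le_size {T : TAry t} (hT : T ≠ nil) : 1 ≤ T.size := by
  cases T with
  | nil => simp at hT
  | node c => simp [size]

lemma leaves_eq_degSum (T : TAry t) : T.leaves = degSum (fun k => if k = 0 then 1 else 0) T := by
  induction T with
  | nil => rfl
  | node c ih =>
    simp only [leaves, degSum_node, ← ih]
    by_cases hc : deg c = 0
    · simp [hc, deg_eq_zero.1 hc, leaves]
    · obtain ⟨i, hi⟩ := exists_ne_nil_of_deg_pos (Nat.pos_of_ne_zero hc)
      have : 1 ≤ ∑ j, (c j).leaves := (one_le_leaves hi).trans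
        (single_le_sum (f := fun j => (c j).leaves) (fun j _ => Nat.zero_le _) (mem_univ i))
      simp [hc, this]

def numInternal (T : TAry t) : ℕ := degSum (fun k => if k = 0 then 0 else 1) T

def slack (T : TAry t) : ℕ := degSum (fun k => if k = 0 then 0 else t - k) T

lemma size_eq_leaves_add_numInternal (T : TAry t) : T.size = T.leaves + numInternal T := by
  rw [leaves_eq_degSum]
  induction T with
  | nil => rfl
  | node c ih =>
    simp only [size, numInternal, degSum_node, ih, sum_add_distrib] at *
    split_ifs <;> omega

lemma slack_add_leaves (T : TAry t) :
    slack T + T.leaves = (t - 1) * numInternal T + (if T = nil then 0 else 1) := by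
  rw [leaves_eq_degSum]
  induction T with
  | nil => simp [slack, numInternal]
  | node c ih =>
    have hchildren : ∑ i, (slack (c i) + degSum (fun k => if k = 0 then 1 else 0) (c i)) =
        (t - 1) * ∑ i, numInternal (c i) + deg c := by
      rw [deg_eq_sum, mul_sum, ← sum_add_distrib]
      exact sum_congr rfl fun i _ => ih i
    have := deg_le c
    simp only [slack, numInternal, degSum_node, sum_add_distrib] at hchildren ⊢
    simp only [node_ne_nil, if_false, mul_add]
    split_ifs <;> omega

/-- `T'` is `T` with the child `i` of the node at `q` moved into the empty slot `j` of the node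
at `p`. -/
lemma exists_move {T : TAry t} {p q : List (Fin t)} {cu cv : Fin t → TAry t}
    (hu : getAt T p = node cu) (hv : getAt T q = node cv) (hqp : ¬ q <+: p)
    {i j : Fin t} (hi : cv i ≠ nil) (hj : cu j = nil) :
    ∃ T' : TAry t, ∀ g : ℕ → ℕ → ℕ,
      nodeSum g 0 T' + g q.length (deg cv) + g p.length (deg cu) +
          nodeSum g (q.length + 1) (cv i) =
        nodeSum g 0 T + g q.length (deg cv - 1) + g p.length (deg cu + 1) +
          nodeSum g (p.length + 1) (cv i) := by
  have hvq : getAt T q ≠ nil := by simp [hv]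
  obtain ⟨c₁, hu₁, hc₁⟩ := getAt_replaceAt_of_not_prefix hvq (node_ne_nil (update cv i nil)) hqp hu
  have hc₁j : c₁ j = nil := (hc₁ j).2 hj
  have hdeg₁ : deg (update cv i nil) = deg cv - 1 := by
    have := deg_update_add cv i nil
    simp only [hi, if_true, if_false] at this
    omega
  have hdeg₂ : deg (update c₁ j (cv i)) = deg cu + 1 := by
    simpa [hi, hc₁j, deg_congr hc₁] using deg_update_add c₁ j (cv i)
  refine ⟨replaceAt (replaceAt T q (node (update cv i nil))) p (node (update c₁ j (cv i))),
    fun g => ?_⟩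
  have h₁ := nodeSum_replaceAt g hvq (node_ne_nil (update cv i nil)) 0
  have h₂ := nodeSum_replaceAt g (hu₁ ▸ node_ne_nil c₁) (node_ne_nil (update c₁ j (cv i))) 0
  have u₁ := nodeSum_node_update g q.length cv i nil
  have u₂ := nodeSum_node_update g p.length c₁ j (cv i)
  rw [hv, zero_add] at h₁
  rw [hu₁, zero_add] at h₂
  rw [hdeg₁, nodeSum_nil] at u₁
  rw [hc₁j, hdeg₂, deg_congr hc₁, nodeSum_nil] at u₂
  omega

lemma exists_contract {T : TAry t} {q : List (Fin t)} {c : Fin t → TAry t}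
    (hq : getAt T q = node c) (hc : deg c = 1) :
    ∃ T' : TAry t, T'.leaves = T.leaves ∧ T'.pathLength < T.pathLength := by
  obtain ⟨i, hi⟩ := exists_ne_nil_of_deg_pos (by omega : 0 < deg c)
  have hq' : getAt T q ≠ nil := by simp [hq]
  refine ⟨replaceAt T q (c i), ?_, ?_⟩
  · have h := nodeSum_replaceAt (fun _ k => if k = 0 then 1 else 0) hq' hi 0
    rw [hq, nodeSum_node_of_deg_eq_one _ _ hc hi] at h
    simp only [nodeSum_eq_degSum, one_ne_zero, if_false] at h
    simp only [leaves_eq_degSum]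
    omega
  · have h := nodeSum_replaceAt (fun d _ => d) hq' hi 0
    rw [hq, nodeSum_node_of_deg_eq_one _ _ hc hi, nodeSum_depth_add] at h
    have := one_le_size hi
    simp only [pathLength, plFrom_eq_nodeSum]
    omega

lemma exists_move_of_length_eq {T : TAry t} {p q : List (Fin t)} {cu cv : Fin t → TAry t}
    (hu : getAt T p = node cu) (hv : getAt T q = node cv) (hpq : p ≠ q)
    (hlen : p.length = q.length) (hu₂ : 2 ≤ deg cu) (hut : deg cu < t) (hv₂ : 2 ≤ deg cv)
    (hvt : deg cv < t) :
    ∃ T' : TAry t, T'.leaves = T.leaves ∧ T'.pathLength = T.pathLength ∧ slack T' = slack T ∧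
      degSum (fun k => k * (t - k)) T' < degSum (fun k => k * (t - k)) T := by
  wlog hvu : deg cv ≤ deg cu generalizing p q cu cv
  · exact this hv hu hpq.symm hlen.symm hv₂ hvt hu₂ hut (by omega)
  obtain ⟨i, hi⟩ := exists_ne_nil_of_deg_pos (by omega : 0 < deg cv)
  obtain ⟨j, hj⟩ := exists_eq_nil_of_deg_lt hut
  obtain ⟨T', hT'⟩ := exists_move hu hv (fun h => hpq (h.eq_of_length hlen.symm).symm) hi hj
  have hcu : deg cu ≠ 0 := by omega
  have hcv : deg cv ≠ 0 := by omega
  have hcv' : deg cv - 1 ≠ 0 := by omega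
  refine ⟨T', ?_, ?_, ?_, ?_⟩
  · have h := hT' fun _ k => if k = 0 then 1 else 0
    simp only [nodeSum_eq_degSum, ← leaves_eq_degSum, hcu, hcv, hcv', Nat.add_one_ne_zero,
      if_false] at h
    omega
  · have h := hT' fun d _ => d
    simp only [hlen, ← plFrom_eq_nodeSum] at h
    exact (by omega : T'.plFrom 0 = T.plFrom 0)
  · have h := hT' fun _ k => if k = 0 then 0 else t - k
    simp only [nodeSum_eq_degSum, hlen, hcu, hcv, hcv', Nat.add_one_ne_zero, if_false] at h
    unfold slack
    omega
  · have h := hT' fun _ k => k * (t - k)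
    simp only [nodeSum_eq_degSum, hlen] at h
    -- strict concavity of `k ↦ k * (t - k)`
    have hbal : (deg cv - 1) * (t - (deg cv - 1)) + (deg cu + 1) * (t - (deg cu + 1)) <
        deg cv * (t - deg cv) + deg cu * (t - deg cu) := by
      zify [(by omega : 1 ≤ deg cv), (by omega : deg cv - 1 ≤ t), (by omega : deg cu + 1 ≤ t),
        hut.le, hvt.le]
      nlinarith
    omega

def IsMinPathLength (T : TAry t) : Prop :=
  ∀ T' : TAry t, T'.leaves = T.leaves → T.pathLength ≤ T'.pathLength

namespace IsMinPathLength

variable {T : TAry t} {p q : List (Fin t)} {cu cv : Fin t → TAry t}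

lemma deg_ne_one {c : Fin t → TAry t} (hT : IsMinPathLength T) (hq : getAt T q = node c) :
    deg c ≠ 1 := fun hc =>
  let ⟨T', hl, hlt⟩ := exists_contract hq hc
  (hT T' hl).not_gt hlt

/-- Otherwise a child subtree of the node at `q` could be moved up into a free slot of the node
at `p`. -/
lemma length_le (hT : IsMinPathLength T) (hu : getAt T p = node cu) (hu₀ : deg cu ≠ 0)
    (hut : deg cu < t) (hv : getAt T q = node cv) (hv₂ : 2 ≤ deg cv) :
    q.length ≤ p.length := by
  by_contra! hlt
  obtain ⟨i, hi⟩ := exists_ne_nil_of_deg_pos (by omega : 0 < deg cv)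
  obtain ⟨j, hj⟩ := exists_eq_nil_of_deg_lt hut
  obtain ⟨T', hT'⟩ := exists_move hu hv (fun h => hlt.not_ge h.length_le) hi hj
  have hl := hT' fun _ k => if k = 0 then 1 else 0
  have hpl := hT' fun d _ => d
  simp only [nodeSum_eq_degSum, ← leaves_eq_degSum, hu₀, show deg cv ≠ 0 by omega,
    show deg cv - 1 ≠ 0 by omega, Nat.add_one_ne_zero, if_false] at hl
  rw [show q.length + 1 = p.length + 1 + (q.length - p.length) by omega,
    nodeSum_depth_add] at hpl
  simp only [← plFrom_eq_nodeSum] at hpl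
  have : T.plFrom 0 ≤ T'.plFrom 0 := hT T' (by omega)
  have := Nat.mul_pos (by omega : 0 < q.length - p.length) (one_le_size hi)
  omega

theorem slack_le (hT : IsMinPathLength T) : slack T ≤ t - 2 := by
  induction hΦ : degSum (fun k => k * (t - k)) T using Nat.strong_induction_on generalizing T with
  | _ n ih =>
  by_contra! hslack
  have hbound : ∀ r c, getAt T r = node c → (if deg c = 0 then 0 else t - deg c) ≤ t - 2 := by
    intro r c hr
    have := hT.deg_ne_one hr
    split_ifs <;> omega
  have hslot : ∀ {r c}, getAt T r = node c →
      0 < (if deg c = 0 then 0 else t - deg c) → 2 ≤ deg c ∧ deg c < t := by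
    intro r c hr hc
    have := hT.deg_ne_one hr
    split_ifs at hc <;> omega
  obtain ⟨p, q, cu, cv, hpq, hu, hfu, hv, hfv⟩ :=
    exists_two_getAt_of_lt (f := fun k => if k = 0 then 0 else t - k) hbound hslack
  obtain ⟨hu₂, hut⟩ := hslot hu hfu
  obtain ⟨hv₂, hvt⟩ := hslot hv hfv
  have hlen : p.length = q.length :=
    (hT.length_le hv (by omega) hvt hu hu₂).antisymm (hT.length_le hu (by omega) hut hv hv₂)
  obtain ⟨T', hl, hpl, hs, hlt⟩ := exists_move_of_length_eq hu hv hpq hlen hu₂ hut hv₂ hvt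
  have hT' : IsMinPathLength T' := fun T'' h => hpl ▸ hT T'' (h.trans hl)
  have := ih _ (hΦ ▸ hlt) hT' rfl
  omega

end IsMinPathLength

end TAry

/-- A `t`-ary tree with `ℓ ≥ 1` leaves of minimal path length among all `t`-ary trees with
`ℓ` leaves has exactly `ℓ + ⌈(ℓ-1)/(t-1)⌉` nodes. -/
theorem stmt15 (t ℓ : ℕ) (ht : 2 ≤ t) (hℓ : 1 ≤ ℓ) (T : TAry t) (hT : T.leaves = ℓ)
    (hmin : ∀ T' : TAry t, T'.leaves = ℓ → T.pathLength ≤ T'.pathLength) :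
    T.size = ℓ + (ℓ - 1 + (t - 2)) / (t - 1) := by
  have hne : T ≠ TAry.nil := by
    rintro rfl
    simp [TAry.leaves] at hT
    omega
  have hslack := TAry.IsMinPathLength.slack_le fun T' h => hmin T' (h.trans hT)
  have hcount := TAry.slack_add_leaves T
  rw [hT, if_neg hne] at hcount
  rw [TAry.size_eq_leaves_add_numInternal, hT, Nat.div_eq_of_lt_le]
  · rw [mul_comm]
    omega
  · rw [add_mul, one_mul, mul_comm]
    omega
end

section
/- For q defined as the least integer with C_t(q) ≥ ℓ−1, one has q = (log² t / α)·m + O(log m), where m = ⌈log_t ℓ⌉ and α = h(1/t)·t·log t, as ℓ → ∞. -/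
/-!
A `t`-ary tree with `n` nodes is encoded by its preorder word, `true` for a node and `false` for
an empty subtree: a word of length `N = t n + 1` with `n` letters `true`. Every such word is a
rotation of the code of some tree (the cycle lemma), so `(N choose n) / N ≤ C_t(n) ≤ N choose n`.
The term `(N choose n) (t-1)^(N-n)` is the largest of the `N + 1` terms of the binomial expansion
of `t ^ N`, which gives `log C_t(n) = n α + O(log n)` with
`α = t log t - (t-1) log (t-1) = h(1/t) t`.
Since `t ^ (m-1) < ℓ ≤ t ^ m`, the least `q` with `C_t(q) ≥ ℓ - 1` satisfies
`q α = m log t + O(log m)`.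
-/

namespace TAry

variable {t : ℕ}

def code : TAry t → List Bool
  | nil => [false]
  | node c => true :: (List.ofFn fun i => code (c i)).flatten

def forestCode (ts : List (TAry t)) : List Bool := (ts.map code).flatten

@[simp] lemma forestCode_nil : forestCode ([] : List (TAry t)) = [] := rfl

@[simp] lemma forestCode_cons (T : TAry t) (ts : List (TAry t)) :
    forestCode (T :: ts) = code T ++ forestCode ts := by
  simp [forestCode]

@[simp] lemma forestCode_append (ts ts' : List (TAry t)) :
    forestCode (ts ++ ts') = forestCode ts ++ forestCode ts' := by
  simp [forestCode]

@[simp] lemma code_nil : code (nil : TAry t) = [false] := rfl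

lemma code_node (c : Fin t → TAry t) : code (node c) = true :: forestCode (List.ofFn c) := by
  simp only [code, forestCode, List.map_ofFn]
  rfl

lemma length_code (T : TAry t) : (code T).length = t * T.size + 1 := by
  induction T with
  | nil => simp [size]
  | node c ih =>
    simp only [code, size, List.length_cons, List.length_flatten, List.map_ofFn, List.sum_ofFn,
      Function.comp_apply, ih, Finset.sum_add_distrib, Finset.sum_const, Finset.card_univ,
      Fintype.card_fin, ← Finset.mul_sum, smul_eq_mul]
    ring

lemma count_code (T : TAry t) : (code T).count true = T.size := by
  induction T with
  | nil => simp [size]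
  | node c ih =>
    simp [code, size, List.count_flatten, List.sum_ofFn, ih, Nat.add_comm]

lemma forestCode_append_inj {ts ts' : List (TAry t)}
    (h : ∀ T ∈ ts, ∀ T' s s', code T ++ s = code T' ++ s' → T = T' ∧ s = s')
    (hlen : ts.length = ts'.length) {s s' : List Bool}
    (he : forestCode ts ++ s = forestCode ts' ++ s') : ts = ts' ∧ s = s' := by
  induction ts generalizing ts' with
  | nil => cases ts' <;> simp_all
  | cons T ts ih =>
    obtain _ | ⟨T', ts'⟩ := ts'
    · simp at hlen
    simp only [forestCode_cons, List.append_assoc] at he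
    obtain ⟨rfl, he'⟩ := h T (by simp) T' _ _ he
    obtain ⟨rfl, rfl⟩ := ih (fun T hT => h T (by simp [hT])) (by simpa using hlen) he'
    simp

lemma code_append_inj (T : TAry t) :
    ∀ (T' : TAry t) (s s' : List Bool), code T ++ s = code T' ++ s' → T = T' ∧ s = s' := by
  induction T with
  | nil => rintro (_ | c') s s' h <;> simp_all [code_node]
  | node c ih =>
    rintro (_ | c') s s' h
    · simp [code_node] at h
    simp only [code_node, List.cons_append, List.cons.injEq, true_and] at h
    obtain ⟨hc, rfl⟩ := forestCode_append_inj (by simpa using ih) (by simp) h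
    exact ⟨by rw [List.ofFn_injective hc], rfl⟩

lemma code_injective : Function.Injective (code : TAry t → List Bool) := fun T T' h =>
  (code_append_inj T T' [] [] (by rw [h])).1


def excess (t : ℕ) (w : List Bool) : ℤ := t * w.count true - w.length

@[simp] lemma excess_nil : excess t [] = 0 := by simp [excess]

lemma excess_append (u v : List Bool) : excess t (u ++ v) = excess t u + excess t v := by
  simp only [excess, List.count_append, List.length_append]
  push_cast
  ring

lemma excess_cons (b : Bool) (w : List Bool) :
    excess t (b :: w) = excess t w + if b then (t : ℤ) - 1 else -1 := by
  cases b <;> simp [excess] <;> ring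

/-- Starting from `k` open slots, a node fills one slot and opens `t`, an empty subtree fills one:
after a prefix, `k + excess` slots are still open. -/
lemma exists_forestCode_of_excess (w : List Bool) (k : ℕ) (hw : excess t w = -k)
    (hpre : ∀ i < w.length, -(k : ℤ) < excess t (w.take i)) :
    ∃ ts : List (TAry t), ts.length = k ∧ forestCode ts = w := by
  induction w generalizing k with
  | nil => exact ⟨[], by simp at hw; simp; omega, rfl⟩
  | cons b w ih =>
    obtain _ | k := k
    · simpa using hpre 0 (by simp)
    have hshift (u : List Bool) := excess_cons (t := t) b u
    have hrest (k' : ℕ) (hk' : (k' : ℤ) = k + 1 + if b then (t : ℤ) - 1 else -1) :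
        ∃ ts : List (TAry t), ts.length = k' ∧ forestCode ts = w := by
      refine ih k' (by push_cast at hw; linarith [hshift w]) fun i hi => ?_
      have := hpre (i + 1) (by simpa using hi)
      rw [List.take_succ_cons, hshift] at this
      push_cast at this
      linarith
    cases b
    · obtain ⟨ts, hlen, hts⟩ := hrest k (by simp)
      exact ⟨nil :: ts, by simp [hlen], by simp [hts]⟩
    · obtain ⟨ts, hlen, hts⟩ := hrest (t + k) (by push_cast; simp; ring)
      have htake : List.ofFn (fun i : Fin t => ts[i]'(by omega)) = ts.take t :=
        List.ext_getElem (by simp; omega) (by simp)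
      refine ⟨node (fun i => ts[i]'(by omega)) :: ts.drop t, by simp; omega, ?_⟩
      rw [forestCode_cons, code_node, htake, List.cons_append, ← forestCode_append,
        List.take_append_drop, hts]

lemma excess_rotate (w : List Bool) (r : ℕ) : excess t (w.rotate r) = excess t w := by
  simp only [excess, (List.rotate_perm w r).count_eq, List.length_rotate]

lemma excess_take_rotate (w : List Bool) {r i : ℕ} (hr : r ≤ w.length) (hi : i ≤ w.length) :
    excess t ((w.rotate r).take i) =
      excess t (w.take (r + i)) - excess t (w.take r) + excess t (w.take (i - (w.length - r))) := by
  rw [List.rotate_eq_drop_append_take hr, List.take_append, List.take_take, List.take_add,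
    excess_append, excess_append, List.length_drop, min_eq_left (by omega)]
  ring

/-- The cycle lemma of Dvoretzky and Motzkin. -/
theorem exists_code_isRotated (w : List Bool) (hw : excess t w = -1) :
    ∃ T : TAry t, code T ~r w := by
  have hN : 0 < w.length := List.length_pos_iff.2 (by rintro rfl; simp at hw)
  -- rotate at the first position where the excess of the prefixes is minimal
  obtain ⟨r, hrN, hr, hfirst⟩ : ∃ r < w.length,
      (∀ j < w.length, excess t (w.take r) ≤ excess t (w.take j)) ∧
        ∀ j < r, excess t (w.take r) < excess t (w.take j) := by
    have hmin : ∃ r, r < w.length ∧ ∀ j < w.length, excess t (w.take r) ≤ excess t (w.take j) := by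
      obtain ⟨r, hr, hmin⟩ := Finset.exists_min_image (Finset.range w.length)
        (fun j => excess t (w.take j)) ⟨0, by simpa⟩
      exact ⟨r, by simpa using hr, fun j hj => hmin j (by simpa)⟩
    obtain ⟨hrN, hr⟩ := Nat.find_spec hmin
    refine ⟨Nat.find hmin, hrN, hr, fun j hj => ?_⟩
    by_contra! h
    exact Nat.find_min hmin hj ⟨by omega, fun k hk => h.trans (hr k hk)⟩
  obtain ⟨ts, hlen, hts⟩ := exists_forestCode_of_excess (t := t) (w.rotate r) 1
    (by rw [excess_rotate, hw]; rfl) fun i hi => by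
      rw [List.length_rotate] at hi
      rw [excess_take_rotate w hrN.le hi.le]
      by_cases hri : r + i < w.length
      · have := hr _ hri
        simp only [show i - (w.length - r) = 0 by omega, List.take_zero, excess_nil]
        push_cast; linarith
      · have := hfirst (i - (w.length - r)) (by omega)
        rw [List.take_of_length_le (by omega : w.length ≤ r + i), hw]
        push_cast; linarith
  obtain ⟨T, rfl⟩ := List.length_eq_one_iff.1 hlen
  have hT : code T = w.rotate r := by simpa using hts
  exact ⟨T, hT ▸ List.IsRotated.forall w r⟩

end TAry

lemma List.count_true_ofFn {N : ℕ} (f : Fin N → Bool) :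
    (List.ofFn f).count true = (Finset.univ.filter (f · = true)).card := by
  induction N with
  | zero => simp
  | succ N ih =>
    rw [List.ofFn_succ, List.count_cons, ih, Fin.univ_succ, Finset.filter_cons]
    split_ifs <;> simp_all [Finset.filter_map, Finset.card_map]

def boolWordsEquivFinset (N n : ℕ) :
    {w : List Bool // w.length = N ∧ w.count true = n} ≃ {s : Finset (Fin N) // s.card = n} where
  toFun w := ⟨Finset.univ.filter fun i : Fin N => w.1[i]'(w.2.1.symm ▸ i.2) = true, by
    rw [← List.count_true_ofFn]
    convert w.2.2 using 2
    exact List.ext_getElem (by simp [w.2.1]) (by simp)⟩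
  invFun s := ⟨List.ofFn fun i => decide (i ∈ s.1), by simp, by simp [List.count_true_ofFn, s.2]⟩
  left_inv w := by ext1; exact List.ext_getElem (by simp [w.2.1]) (by simp)
  right_inv s := by ext; simp

instance (N n : ℕ) : Finite {w : List Bool // w.length = N ∧ w.count true = n} :=
  Finite.of_equiv _ (boolWordsEquivFinset N n).symm

lemma natCard_boolWords (N n : ℕ) :
    Nat.card {w : List Bool // w.length = N ∧ w.count true = n} = N.choose n := by
  rw [Nat.card_congr (boolWordsEquivFinset N n), Nat.card_eq_fintype_card,
    Fintype.card_finset_len, Fintype.card_fin]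

namespace TAry

variable {t : ℕ}

def codeWord (n : ℕ) (T : {T : TAry t // T.size = n}) :
    {w : List Bool // w.length = t * n + 1 ∧ w.count true = n} :=
  ⟨code T.1, by rw [length_code, T.2], by rw [count_code, T.2]⟩

lemma codeWord_injective (n : ℕ) : Function.Injective (codeWord (t := t) n) :=
  fun _ _ h => Subtype.ext (code_injective (congrArg Subtype.val h))

instance (n : ℕ) : Finite {T : TAry t // T.size = n} :=
  Finite.of_injective _ (codeWord_injective n)

lemma Ct_le_choose (n : ℕ) : Ct t n ≤ (t * n + 1).choose n := by
  rw [← natCard_boolWords]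
  exact Nat.card_le_card_of_injective _ (codeWord_injective n)

/-- Each word of length `t n + 1` with `n` letters `true` is one of the `t n + 1` rotations of the
code of a tree of size `n`. -/
lemma choose_le_mul_Ct (n : ℕ) : (t * n + 1).choose n ≤ (t * n + 1) * Ct t n := by
  let rotateCode (p : {T : TAry t // T.size = n} × Fin (t * n + 1)) :
      {w : List Bool // w.length = t * n + 1 ∧ w.count true = n} :=
    ⟨(code p.1.1).rotate p.2, (List.length_rotate _ _).trans (codeWord n p.1).2.1,
      ((List.rotate_perm _ _).count_eq _).trans (codeWord n p.1).2.2⟩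
  have hsurj : Function.Surjective rotateCode := by
    rintro ⟨w, hlen, hcount⟩
    obtain ⟨T, hT⟩ := exists_code_isRotated (t := t) w (by
      simp only [excess, hlen, hcount]; push_cast; ring)
    obtain ⟨k, hk, hrot⟩ := List.isRotated_iff_mod.1 hT
    have hsize : T.size = n := by
      rw [← count_code, hT.perm.count_eq, hcount]
    have hN : (code T).length = t * n + 1 := by rw [length_code, hsize]
    refine ⟨(⟨T, hsize⟩, ⟨k % (t * n + 1), Nat.mod_lt _ (by omega)⟩), Subtype.ext ?_⟩
    simp only [rotateCode, ← hN, List.rotate_mod, hrot]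
  have := Nat.card_le_card_of_surjective _ hsurj
  rwa [Nat.card_prod, Nat.card_fin, natCard_boolWords, Nat.mul_comm (Nat.card _)] at this

end TAry

namespace Nat

lemma sum_range_choose_mul_pow (N a : ℕ) :
    ∑ k ∈ Finset.range (N + 1), N.choose k * a ^ (N - k) = (a + 1) ^ N := by
  rw [add_comm a 1, add_pow]
  simp [mul_comm]

lemma choose_mul_pow_le_pow (N n a : ℕ) : N.choose n * a ^ (N - n) ≤ (a + 1) ^ N := by
  rcases lt_or_ge N n with h | h
  · simp [Nat.choose_eq_zero_of_lt h]
  rw [← sum_range_choose_mul_pow]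
  exact Finset.single_le_sum (f := fun k => N.choose k * a ^ (N - k)) (by simp)
    (Finset.mem_range.2 (by omega))

lemma choose_mul_pow_mul_eq {N k : ℕ} (hk : k < N) (a : ℕ) :
    N.choose k * a ^ (N - k) * (N - k) =
      N.choose (k + 1) * a ^ (N - (k + 1)) * (a * (k + 1)) := by
  obtain ⟨e, he⟩ : ∃ e, N - k = e + 1 := ⟨N - (k + 1), by omega⟩
  have hpascal := Nat.choose_succ_right_eq N k
  rw [he] at hpascal ⊢
  rw [show N - (k + 1) = e by omega]
  calc N.choose k * a ^ (e + 1) * (e + 1) = N.choose k * (e + 1) * a ^ e * a := by ring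
    _ = N.choose (k + 1) * a ^ e * (a * (k + 1)) := by rw [← hpascal]; ring

lemma choose_mul_pow_le_succ {N k a : ℕ} (hk : k < N) (h : a * (k + 1) ≤ N - k) :
    N.choose k * a ^ (N - k) ≤ N.choose (k + 1) * a ^ (N - (k + 1)) := by
  refine Nat.le_of_mul_le_mul_right ?_ (show 0 < N - k by omega)
  rw [choose_mul_pow_mul_eq hk]
  exact Nat.mul_le_mul_left _ h

lemma choose_succ_mul_pow_le {N k a : ℕ} (h : N - k ≤ a * (k + 1)) :
    N.choose (k + 1) * a ^ (N - (k + 1)) ≤ N.choose k * a ^ (N - k) := by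
  rcases lt_or_ge k N with hk | hk
  · refine Nat.le_of_mul_le_mul_right ?_ (show 0 < a * (k + 1) by omega)
    rw [← choose_mul_pow_mul_eq hk]
    exact Nat.mul_le_mul_left _ h
  · simp [Nat.choose_eq_zero_of_lt (show N < k + 1 by omega)]

lemma choose_mul_pow_le_of_mode {N n a : ℕ} (hn : n ≤ N) (h₁ : a * n ≤ N - n + 1)
    (h₂ : N - n ≤ a * (n + 1)) (k : ℕ) :
    N.choose k * a ^ (N - k) ≤ N.choose n * a ^ (N - n) := by
  have hmono : MonotoneOn (fun k => N.choose k * a ^ (N - k)) (Set.Iic n) :=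
    monotoneOn_of_le_succ Set.ordConnected_Iic fun k _ _ hk => by
      simp only [Set.mem_Iic, Order.succ_eq_add_one] at hk ⊢
      refine choose_mul_pow_le_succ (by omega) ?_
      calc a * (k + 1) ≤ a * n := Nat.mul_le_mul_left a hk
        _ ≤ N - k := by omega
  have hanti : AntitoneOn (fun k => N.choose k * a ^ (N - k)) (Set.Ici n) :=
    antitoneOn_of_succ_le Set.ordConnected_Ici fun k _ hk _ => by
      simp only [Set.mem_Ici, Order.succ_eq_add_one] at hk ⊢
      refine choose_succ_mul_pow_le ?_
      calc N - k ≤ a * (n + 1) := by omega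
        _ ≤ a * (k + 1) := Nat.mul_le_mul_left a (by omega)
  exact isMaxOn_univ_of_mono_anti hmono hanti (Set.mem_univ k)

lemma pow_le_succ_mul_choose_mul_pow {N n a : ℕ} (hn : n ≤ N) (h₁ : a * n ≤ N - n + 1)
    (h₂ : N - n ≤ a * (n + 1)) : (a + 1) ^ N ≤ (N + 1) * (N.choose n * a ^ (N - n)) := by
  rw [← sum_range_choose_mul_pow]
  simpa using Finset.sum_le_card_nsmul (Finset.range (N + 1)) _ _
    fun k _ => choose_mul_pow_le_of_mode hn h₁ h₂ k

end Nat

namespace TAry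

variable {t : ℕ}

lemma Ct_pos (ht : 1 ≤ t) (n : ℕ) : 0 < Ct t n := by
  have := (Nat.choose_pos (show n ≤ t * n + 1 by nlinarith)).trans_le (choose_le_mul_Ct n)
  exact Nat.pos_of_mul_pos_left this

lemma mul_add_one_sub_self (ht : 1 ≤ t) (n : ℕ) : t * n + 1 - n = (t - 1) * n + 1 := by
  have : n ≤ t * n := Nat.le_mul_of_pos_left n ht
  rw [Nat.sub_one_mul]
  omega

lemma Ct_mul_pow_le (ht : 1 ≤ t) (n : ℕ) :
    Ct t n * (t - 1) ^ ((t - 1) * n + 1) ≤ t ^ (t * n + 1) := by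
  have hN := mul_add_one_sub_self ht n
  calc Ct t n * (t - 1) ^ ((t - 1) * n + 1)
      ≤ (t * n + 1).choose n * (t - 1) ^ (t * n + 1 - n) := by rw [hN]; gcongr; exact Ct_le_choose n
    _ ≤ (t - 1 + 1) ^ (t * n + 1) := Nat.choose_mul_pow_le_pow _ _ _
    _ = t ^ (t * n + 1) := by rw [Nat.sub_add_cancel ht]

lemma pow_le_Ct_mul_pow (ht : 2 ≤ t) (n : ℕ) :
    t ^ (t * n + 1) ≤ (t * n + 2) * ((t * n + 1) * Ct t n) * (t - 1) ^ ((t - 1) * n + 1) := by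
  have hN := mul_add_one_sub_self (by omega : 1 ≤ t) n
  calc t ^ (t * n + 1) = (t - 1 + 1) ^ (t * n + 1) := by rw [Nat.sub_add_cancel (by omega)]
    _ ≤ (t * n + 1 + 1) * ((t * n + 1).choose n * (t - 1) ^ (t * n + 1 - n)) :=
      Nat.pow_le_succ_mul_choose_mul_pow (by nlinarith) (by rw [hN]; omega)
        (by rw [hN, Nat.mul_succ]; omega)
    _ ≤ (t * n + 2) * ((t * n + 1) * Ct t n) * (t - 1) ^ ((t - 1) * n + 1) := by
      rw [hN, ← mul_assoc]; gcongr; exact choose_le_mul_Ct n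

end TAry

/-- `exp (logGrowth t) = t ^ t / (t - 1) ^ (t - 1)` is the exponential growth rate of `Ct t n`. -/
noncomputable def logGrowth (t : ℝ) : ℝ := t * Real.log t - (t - 1) * Real.log (t - 1)

lemma binEnt_inv_mul_self (t : ℝ) : binEnt (1 / t) * t = logGrowth t := by
  rcases eq_or_ne t 0 with rfl | h0
  · simp [binEnt, logGrowth]
  rcases eq_or_ne t 1 with rfl | h1
  · simp [binEnt, logGrowth]
  rw [binEnt, logGrowth, show 1 - 1 / t = (t - 1) / t by field_simp, one_div, Real.log_inv,
    Real.log_div (sub_ne_zero.2 h1) h0]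
  field_simp
  ring

lemma log_le_logGrowth {t : ℝ} (ht : 1 ≤ t) : Real.log t ≤ logGrowth t := by
  rcases ht.eq_or_lt with rfl | ht
  · simp [logGrowth]
  have : Real.log (t - 1) ≤ Real.log t := Real.log_le_log (by linarith) (by linarith)
  rw [logGrowth]
  nlinarith

lemma logGrowth_pos {t : ℝ} (ht : 1 < t) : 0 < logGrowth t :=
  (Real.log_pos ht).trans_le (log_le_logGrowth ht.le)

namespace TAry

variable {t : ℕ}

lemma log_Ct_le (ht : 2 ≤ t) (n : ℕ) : Real.log (Ct t n) ≤ n * logGrowth t + Real.log t := by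
  have ht' : (2 : ℝ) ≤ t := by exact_mod_cast ht
  have hCt : (0 : ℝ) < Ct t n := by exact_mod_cast Ct_pos (by omega) n
  have hbound := (Nat.cast_le (α := ℝ)).2 (Ct_mul_pow_le (t := t) (by omega) n)
  push_cast [Nat.cast_pred (show 0 < t by omega)] at hbound
  have hlog := Real.log_le_log (mul_pos hCt (pow_pos (by linarith) _)) hbound
  rw [Real.log_mul hCt.ne' (pow_pos (by linarith) _).ne', Real.log_pow, Real.log_pow] at hlog
  have : 0 ≤ Real.log ((t : ℝ) - 1) := Real.log_nonneg (by linarith)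
  push_cast [Nat.cast_pred (show 0 < t by omega)] at hlog
  rw [logGrowth]
  nlinarith

lemma log_Ct_ge (ht : 2 ≤ t) (n : ℕ) :
    n * logGrowth t - 2 * Real.log (t * n + 2) ≤ Real.log (Ct t n) := by
  have ht' : (2 : ℝ) ≤ t := by exact_mod_cast ht
  have hCt : (0 : ℝ) < Ct t n := by exact_mod_cast Ct_pos (by omega) n
  have hbound := (Nat.cast_le (α := ℝ)).2 (pow_le_Ct_mul_pow ht n)
  push_cast [Nat.cast_pred (show 0 < t by omega)] at hbound
  have hlog := Real.log_le_log (by positivity) hbound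
  rw [Real.log_mul (by positivity) (pow_pos (by linarith) _).ne',
    Real.log_mul (by positivity) (by positivity), Real.log_mul (by positivity) hCt.ne',
    Real.log_pow, Real.log_pow] at hlog
  have : Real.log (t * n + 1) ≤ Real.log (t * n + 2) :=
    Real.log_le_log (by positivity) (by linarith)
  have : Real.log ((t : ℝ) - 1) ≤ Real.log t := Real.log_le_log (by linarith) (by linarith)
  push_cast [Nat.cast_pred (show 0 < t by omega)] at hlog
  rw [logGrowth]
  nlinarith

lemma clog_sub_two_mul_log_le (ht : 2 ≤ t) {ℓ q : ℕ} (hℓ : 2 ≤ ℓ) (hq : ℓ - 1 ≤ Ct t q) :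
    ((Nat.clog t ℓ : ℝ) - 2) * Real.log t ≤ q * logGrowth t := by
  have hm := Nat.clog_pos (show 1 < t by omega) hℓ
  have hpow : t ^ (Nat.clog t ℓ - 1) ≤ Ct t q := by
    have := Nat.pow_pred_clog_lt_self (show 1 < t by omega) hℓ
    rw [Nat.pred_eq_sub_one] at this
    omega
  have hlog : ((Nat.clog t ℓ - 1 : ℕ) : ℝ) * Real.log t ≤ Real.log (Ct t q) := by
    rw [← Real.log_pow]
    exact Real.log_le_log (pow_pos (by positivity) _) (by exact_mod_cast hpow)
  rw [Nat.cast_pred hm] at hlog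
  linarith [log_Ct_le ht q]

lemma pow_le_Ct_of_mul_log_le (ht : 2 ≤ t) {m q : ℕ}
    (h : m * Real.log t + 2 * Real.log (t * q + 2) ≤ q * logGrowth t) : t ^ m ≤ Ct t q := by
  have hpow : (t : ℝ) ^ m ≤ Ct t q := by
    rw [← Real.log_le_log_iff (by positivity) (by exact_mod_cast Ct_pos (by omega) q),
      Real.log_pow]
    linarith [log_Ct_ge ht q]
  exact_mod_cast hpow

lemma exists_le_Ct_lt (ht : 2 ≤ t) {m : ℕ} (hm₃ : 3 ≤ m) (hmt : t * (4 / logGrowth t + 2) + 1 ≤ m) :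
    ∃ q : ℕ, t ^ m ≤ Ct t q ∧
      (q : ℝ) < (m * Real.log t + 4 * Real.log m) / logGrowth t + 1 := by
  have ht' : (1 : ℝ) < t := by exact_mod_cast ht
  have hα := logGrowth_pos ht'
  have hβα := log_le_logGrowth ht'.le
  have hm : (3 : ℝ) ≤ m := by exact_mod_cast hm₃
  have hlogm : Real.log m ≤ m := (Real.log_le_sub_one_of_pos (by positivity)).trans (by linarith)
  have hlogm₀ : 0 ≤ Real.log m := Real.log_nonneg (by linarith)
  set x := (m * Real.log t + 4 * Real.log m) / logGrowth t
  have hx : 0 ≤ x := by positivity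
  refine ⟨⌈x⌉₊, ?_, Nat.ceil_lt_add_one hx⟩
  -- `hmt` makes `t ⌈x⌉₊ + 2 ≤ m ^ 2`, so the loss `2 log (t q + 2)` of `log_Ct_ge` is `≤ 4 log m`
  have hq : (⌈x⌉₊ : ℝ) ≤ (4 / logGrowth t + 2) * m := by
    have h₁ : m * (Real.log t / logGrowth t) ≤ m :=
      mul_le_of_le_one_right (by positivity) ((div_le_one hα).2 hβα)
    have h₂ : Real.log m / logGrowth t ≤ m / logGrowth t :=
      div_le_div_of_nonneg_right hlogm hα.le
    have : x = m * (Real.log t / logGrowth t) + 4 * (Real.log m / logGrowth t) := by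
      simp only [x]; ring
    have : (4 / logGrowth t + 2) * m = 4 * (m / logGrowth t) + 2 * m := by ring
    linarith [Nat.ceil_lt_add_one hx]
  have hlog : Real.log (t * ⌈x⌉₊ + 2) ≤ 2 * Real.log m := by
    have h₁ := mul_le_mul_of_nonneg_left hq (Nat.cast_nonneg t)
    have h₂ := mul_le_mul_of_nonneg_right (show t * (4 / logGrowth t + 2) ≤ m - 1 by linarith)
      (Nat.cast_nonneg m)
    calc Real.log (t * ⌈x⌉₊ + 2) ≤ Real.log ((m : ℝ) ^ 2) :=
          Real.log_le_log (by positivity) (by nlinarith)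
      _ = 2 * Real.log m := by simp [Real.log_pow]
  refine pow_le_Ct_of_mul_log_le ht ?_
  have := (div_le_iff₀ hα).1 (Nat.le_ceil x)
  linarith

lemma abs_sInf_sub_le (ht : 2 ≤ t) {ℓ : ℕ} (hℓ : 2 ≤ ℓ) (hm₃ : 3 ≤ Nat.clog t ℓ)
    (hmt : t * (4 / logGrowth t + 2) + 1 ≤ Nat.clog t ℓ) :
    |((sInf {q : ℕ | ℓ - 1 ≤ Ct t q} : ℕ) : ℝ) - Real.log t / logGrowth t * Nat.clog t ℓ| ≤
      (4 / logGrowth t + 2) * Real.log (Nat.clog t ℓ) := by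
  have ht' : (1 : ℝ) < t := by exact_mod_cast ht
  have hα := logGrowth_pos ht'
  have hr : Real.log t / logGrowth t ≤ 1 := (div_le_one hα).2 (log_le_logGrowth ht'.le)
  have hlogm : 1 ≤ Real.log (Nat.clog t ℓ) := by
    rw [Real.le_log_iff_exp_le (by positivity)]
    exact Real.exp_one_lt_three.le.trans (by exact_mod_cast hm₃)
  have hs : 0 ≤ Real.log (Nat.clog t ℓ) / logGrowth t := by positivity
  obtain ⟨q₁, hq₁, hq₁lt⟩ := exists_le_Ct_lt ht hm₃ hmt
  have hq₁S : ℓ - 1 ≤ Ct t q₁ := by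
    have := Nat.le_pow_clog (show 1 < t by omega) ℓ
    omega
  have hupper : ((sInf {q : ℕ | ℓ - 1 ≤ Ct t q} : ℕ) : ℝ) ≤ q₁ := by
    exact_mod_cast Nat.sInf_le (s := {q | ℓ - 1 ≤ Ct t q}) hq₁S
  have hlower : ((Nat.clog t ℓ : ℝ) - 2) * (Real.log t / logGrowth t) ≤
      ((sInf {q : ℕ | ℓ - 1 ≤ Ct t q} : ℕ) : ℝ) := by
    rw [← mul_div_assoc, div_le_iff₀ hα]
    exact clog_sub_two_mul_log_le ht hℓ (Nat.sInf_mem (s := {q | ℓ - 1 ≤ Ct t q}) ⟨q₁, hq₁S⟩)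
  have e₁ : (Nat.clog t ℓ * Real.log t + 4 * Real.log (Nat.clog t ℓ)) / logGrowth t =
      Real.log t / logGrowth t * Nat.clog t ℓ + 4 * (Real.log (Nat.clog t ℓ) / logGrowth t) := by
    ring
  have e₂ : (4 / logGrowth t + 2) * Real.log (Nat.clog t ℓ) =
      4 * (Real.log (Nat.clog t ℓ) / logGrowth t) + 2 * Real.log (Nat.clog t ℓ) := by
    ring
  rw [abs_le]
  constructor <;> linarith

end TAry

/-- For `q(ℓ)` the least integer with `C_t(q) ≥ ℓ - 1`, one has
`q(ℓ) = (log² t / α)·m + O(log m)` where `m = ⌈log_t ℓ⌉` and `α = h(1/t)·t·log t`. -/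
theorem stmt19 (t : ℕ) (ht : 2 ≤ t) :
    ∃ c : ℝ, ∃ L₀ : ℕ, ∀ ℓ : ℕ, L₀ ≤ ℓ →
      |((sInf {q : ℕ | ℓ - 1 ≤ Ct t q} : ℕ) : ℝ) -
          (Real.log t) ^ 2 / (binEnt (1 / t) * t * Real.log t) * (Nat.clog t ℓ : ℝ)| ≤
        c * Real.log (Nat.clog t ℓ : ℝ) := by
  have ht' : (1 : ℝ) < t := by exact_mod_cast ht
  have hcoeff :
      (Real.log t) ^ 2 / (binEnt (1 / t) * t * Real.log t) = Real.log t / logGrowth t := by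
    rw [binEnt_inv_mul_self, pow_two, mul_div_mul_right _ _ (Real.log_pos ht').ne']
  set K := ⌈t * (4 / logGrowth t + 2)⌉₊ + 3
  refine ⟨4 / logGrowth t + 2, t ^ K, fun ℓ hℓ => ?_⟩
  have hK : K ≤ Nat.clog t ℓ := by
    simpa [Nat.clog_pow _ _ (show 1 < t by omega)] using Nat.clog_mono_right t hℓ
  have hℓ₂ : 2 ≤ ℓ := by
    have := Nat.le_self_pow (show K ≠ 0 by omega) t
    omega
  rw [hcoeff]
  refine TAry.abs_sInf_sub_le ht hℓ₂ (by omega) ?_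
  have := Nat.le_ceil (t * (4 / logGrowth t + 2))
  have : (K : ℝ) ≤ Nat.clog t ℓ := by exact_mod_cast hK
  push_cast [K] at this
  linarith
end
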